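/- arXiv:1809.09178 — 5 statements merged into one kernel-verified Lean document; each statement's English description precedes it below -/
import Mathlib

section
/- Let Ω ⊆ ℝ³ be a connected open set and let y₁, y₂ : Ω → ℝ³ be twice continuously differentiable maps whose Jacobian matrices Dy₁(x), Dy₂(x) have positive determinant at every x ∈ Ω, and whose right Cauchy–Green fields coincide: (Dy₁(x))ᵀ Dy₁(x) = (Dy₂(x))ᵀ Dy₂(x) for all x ∈ Ω. Then y₁ and y₂ are rigidly related: there exist a constant proper orthogonal 3×3 matrix R (Rᵀ R = I, det R = 1) and a constant vector t ∈ ℝ³ such that y₁(x) = R y₂(x) + t for all x ∈ Ω. -/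
noncomputable section

open Matrix

/-- Points of 3-d Euclidean space, as triples of reals. -/
abbrev E3 : Type := Fin 3 → ℝ

/-- Partial derivative `∂_j f` of a scalar field `f` at `x`. -/
noncomputable def pd (j : Fin 3) (f : E3 → ℝ) (x : E3) : ℝ :=
  fderiv ℝ f x (Pi.single j 1)

/-- The Jacobian matrix `Dy(x)` of a map `y : ℝ³ → ℝ³`, with entries `(Dy)_{iα} = ∂_α y^i`. -/
noncomputable def jac (y : E3 → E3) (x : E3) : Matrix (Fin 3) (Fin 3) ℝ :=
  Matrix.of fun i α => pd α (fun z => y z i) x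

/-!
The Christoffel identity
`2 D²y(u,v) · Dy w = ∂_u g(v,w) + ∂_v g(u,w) - ∂_w g(u,v)`, with `g(u,v) = Dy u · Dy v`,
recovers `(Dy)ᵀ D²y` from the Cauchy–Green field alone, thanks to the symmetry of `D²y`.
Equal Cauchy–Green fields thus give `∂(Dy₁) = R ∂(Dy₂)` for the pointwise rotation
`R = Dy₁ (Dy₂)⁻¹`. Differentiating `R Dy₂ = Dy₁` then yields `(DR) Dy₂ = 0`, so `R` is locally
constant, hence constant on the connected set `Ω`, and `y₁ - R y₂` has zero derivative there.
-/

open Filter Topology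

namespace Matrix

variable {n : Type*} [Fintype n] [DecidableEq n] {K : Type*} [Field K]

theorem transpose_mul_self_mul_inv {F G : Matrix n n K} (hC : Fᵀ * F = Gᵀ * G)
    (hG : IsUnit G.det) : (F * G⁻¹)ᵀ * (F * G⁻¹) = 1 := by
  rw [transpose_mul, transpose_nonsing_inv, Matrix.mul_assoc, ← Matrix.mul_assoc Fᵀ, hC,
    Matrix.mul_assoc, mul_nonsing_inv _ hG, Matrix.mul_one,
    nonsing_inv_mul _ (by rwa [det_transpose])]

theorem eq_mul_inv_mulVec_of_vecMul_eq {F G : Matrix n n K} {a b : n → K}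
    (hC : Fᵀ * F = Gᵀ * G) (hG : IsUnit G.det) (h : a ᵥ* F = b ᵥ* G) :
    a = (F * G⁻¹) *ᵥ b := by
  set R := F * G⁻¹
  have hF : F = R * G := by rw [Matrix.mul_assoc, nonsing_inv_mul _ hG, Matrix.mul_one]
  have hb : b = Rᵀ *ᵥ a := by
    rw [hF, ← vecMul_vecMul] at h
    rw [← vecMul_transpose, transpose_transpose]
    exact (vecMul_injective_iff_isUnit.2 ((isUnit_iff_isUnit_det G).2 hG) h).symm
  rw [hb, mulVec_mulVec, mul_eq_one_comm.1 (transpose_mul_self_mul_inv hC hG), one_mulVec]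

variable [LinearOrder K] [IsStrictOrderedRing K]

theorem det_mul_inv_eq_one {F G : Matrix n n K} (hC : Fᵀ * F = Gᵀ * G) (hF : 0 < F.det)
    (hG : 0 < G.det) : (F * G⁻¹).det = 1 := by
  have hsq : F.det ^ 2 = G.det ^ 2 := by
    simpa [det_mul, det_transpose, sq] using congrArg det hC
  rw [det_mul, det_nonsing_inv, Ring.inverse_eq_inv',
    (pow_left_inj₀ hF.le hG.le two_ne_zero).1 hsq, mul_inv_cancel₀ hG.ne']

end Matrix

section CauchyGreen

variable {E : Type*} [NormedAddCommGroup E] [NormedSpace ℝ E] {ι : Type*} [Fintype ι]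

theorem fderiv_dotProduct_apply {a b : E → ι → ℝ} {x : E} (ha : DifferentiableAt ℝ a x)
    (hb : DifferentiableAt ℝ b x) (w : E) :
    fderiv ℝ (fun z => a z ⬝ᵥ b z) x w = fderiv ℝ a x w ⬝ᵥ b x + a x ⬝ᵥ fderiv ℝ b x w := by
  have hsum := HasFDerivAt.fun_sum (u := Finset.univ) fun i _ =>
    (hasFDerivAt_pi'.1 ha.hasFDerivAt i).fun_mul (hasFDerivAt_pi'.1 hb.hasFDerivAt i)
  simp only [dotProduct]
  rw [hsum.fderiv]
  simp [Finset.sum_add_distrib, mul_comm, add_comm]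

def cauchyGreen (y : E → ι → ℝ) (x u v : E) : ℝ :=
  fderiv ℝ y x u ⬝ᵥ fderiv ℝ y x v

variable {y : E → ι → ℝ} {x : E}

theorem fderiv_cauchyGreen_apply (hy : DifferentiableAt ℝ (fderiv ℝ y) x) (u v w : E) :
    fderiv ℝ (fun z => cauchyGreen y z u v) x w =
      fderiv ℝ (fderiv ℝ y) x w u ⬝ᵥ fderiv ℝ y x v
        + fderiv ℝ y x u ⬝ᵥ fderiv ℝ (fderiv ℝ y) x w v := by
  have happly : ∀ u : E, HasFDerivAt (fun z => fderiv ℝ y z u)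
      ((ContinuousLinearMap.apply ℝ _ u).comp (fderiv ℝ (fderiv ℝ y) x)) x := fun u =>
    (ContinuousLinearMap.apply ℝ (ι → ℝ) u).hasFDerivAt.comp x hy.hasFDerivAt
  unfold cauchyGreen
  rw [fderiv_dotProduct_apply (happly u).differentiableAt (happly v).differentiableAt,
    (happly u).fderiv, (happly v).fderiv]
  rfl

theorem two_mul_fderiv_fderiv_dotProduct (hy : ContDiffAt ℝ 2 y x) (u v w : E) :
    2 * (fderiv ℝ (fderiv ℝ y) x u v ⬝ᵥ fderiv ℝ y x w) =
      fderiv ℝ (fun z => cauchyGreen y z v w) x u + fderiv ℝ (fun z => cauchyGreen y z u w) x v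
        - fderiv ℝ (fun z => cauchyGreen y z u v) x w := by
  have hdiff : DifferentiableAt ℝ (fderiv ℝ y) x :=
    (hy.fderiv_right (m := 1) (by norm_num)).differentiableAt one_ne_zero
  have hsymm := hy.isSymmSndFDerivAt (by simp [minSmoothness_of_isRCLikeNormedField])
  simp only [fderiv_cauchyGreen_apply hdiff, hsymm.eq w, hsymm.eq v u,
    dotProduct_comm (fderiv ℝ y x _)]
  ring

theorem fderiv_fderiv_dotProduct_eq_of_cauchyGreen_eventuallyEq {y₁ y₂ : E → ι → ℝ}
    (h₁ : ContDiffAt ℝ 2 y₁ x) (h₂ : ContDiffAt ℝ 2 y₂ x)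
    (hC : ∀ᶠ z in 𝓝 x, ∀ u v, cauchyGreen y₁ z u v = cauchyGreen y₂ z u v) (u v w : E) :
    fderiv ℝ (fderiv ℝ y₁) x u v ⬝ᵥ fderiv ℝ y₁ x w =
      fderiv ℝ (fderiv ℝ y₂) x u v ⬝ᵥ fderiv ℝ y₂ x w := by
  have hd : ∀ u v, fderiv ℝ (fun z => cauchyGreen y₁ z u v) x =
      fderiv ℝ (fun z => cauchyGreen y₂ z u v) x := fun u v =>
    EventuallyEq.fderiv_eq (hC.mono fun z hz => hz u v)
  have := two_mul_fderiv_fderiv_dotProduct h₁ u v w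
  rw [hd, hd, hd, ← two_mul_fderiv_fderiv_dotProduct h₂ u v w] at this
  linarith

end CauchyGreen

theorem HasFDerivAt.eq_zero_of_mul_eventuallyEq {𝕜 E 𝔸 : Type*} [NontriviallyNormedField 𝕜]
    [NormedAddCommGroup E] [NormedSpace 𝕜 E] [NormedRing 𝔸] [NormedAlgebra 𝕜 𝔸]
    {R A B : E → 𝔸} {R' A' B' : E →L[𝕜] 𝔸} {x : E} (hR : HasFDerivAt R R' x)
    (hA : HasFDerivAt A A' x) (hB : HasFDerivAt B B' x) (hRB : R * B =ᶠ[𝓝 x] A)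
    (hBx : IsUnit (B x)) (hA' : ∀ w, A' w = R x * B' w) : R' = 0 := by
  have hderiv := (hR.mul' hB).unique (hA.congr_of_eventuallyEq hRB)
  ext1 w
  have hw : R x * B' w + R' w * B x = R x * B' w := by
    simpa [hA'] using congrArg (· w) hderiv
  exact hBx.mul_left_eq_zero.1 (add_eq_left.1 hw)

-- A normed-algebra structure on matrices, to differentiate matrix inversion; every norm on this
-- finite-dimensional space gives the same derivatives.
attribute [local instance] Matrix.linftyOpNormedRing Matrix.linftyOpNormedAlgebra

def toMatrixCLM : (E3 →L[ℝ] E3) →L[ℝ] Matrix (Fin 3) (Fin 3) ℝ :=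
  (LinearMap.toMatrix'.toLinearMap ∘ₗ ContinuousLinearMap.coeLM ℝ).toContinuousLinearMap

theorem toMatrixCLM_apply (L : E3 →L[ℝ] E3) :
    toMatrixCLM L = LinearMap.toMatrix' (L : E3 →ₗ[ℝ] E3) :=
  rfl

section Jacobian

variable {y y₁ y₂ : E3 → E3} {x : E3}

theorem jac_eq_toMatrixCLM (hy : DifferentiableAt ℝ y x) :
    jac y x = toMatrixCLM (fderiv ℝ y x) := by
  ext i α
  simp [jac, pd, toMatrixCLM_apply, LinearMap.toMatrix'_apply, fderiv_apply hy]

theorem fderiv_apply_eq_jac_mulVec (hy : DifferentiableAt ℝ y x) (u : E3) :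
    fderiv ℝ y x u = jac y x *ᵥ u := by
  rw [jac_eq_toMatrixCLM hy, toMatrixCLM_apply, LinearMap.toMatrix'_mulVec]
  rfl

theorem cauchyGreen_eq_dotProduct_mulVec (hy : DifferentiableAt ℝ y x) (u v : E3) :
    cauchyGreen y x u v = u ⬝ᵥ ((jac y x)ᵀ * jac y x) *ᵥ v := by
  rw [cauchyGreen, fderiv_apply_eq_jac_mulVec hy, fderiv_apply_eq_jac_mulVec hy, ← mulVec_mulVec,
    dotProduct_mulVec u, vecMul_transpose]

theorem hasFDerivAt_jac (hy : ContDiffAt ℝ 2 y x) :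
    HasFDerivAt (jac y) (toMatrixCLM.comp (fderiv ℝ (fderiv ℝ y) x)) x := by
  have hdiff : DifferentiableAt ℝ (fderiv ℝ y) x :=
    (hy.fderiv_right (m := 1) (by norm_num)).differentiableAt one_ne_zero
  refine (toMatrixCLM.hasFDerivAt.comp x hdiff.hasFDerivAt).congr_of_eventuallyEq ?_
  filter_upwards [hy.eventually (by simp)] with z hz
  exact jac_eq_toMatrixCLM (hz.differentiableAt two_ne_zero)

theorem fderiv_fderiv_eq_mul_inv_mulVec (h₁ : ContDiffAt ℝ 2 y₁ x) (h₂ : ContDiffAt ℝ 2 y₂ x)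
    (hdet : IsUnit (jac y₂ x).det)
    (hC : ∀ᶠ z in 𝓝 x, (jac y₁ z)ᵀ * jac y₁ z = (jac y₂ z)ᵀ * jac y₂ z) (w u : E3) :
    fderiv ℝ (fderiv ℝ y₁) x w u =
      (jac y₁ x * (jac y₂ x)⁻¹) *ᵥ fderiv ℝ (fderiv ℝ y₂) x w u := by
  have hCG : ∀ᶠ z in 𝓝 x, ∀ u v, cauchyGreen y₁ z u v = cauchyGreen y₂ z u v := by
    filter_upwards [hC, h₁.eventually (by simp), h₂.eventually (by simp)] with z hz hz₁ hz₂ u v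
    rw [cauchyGreen_eq_dotProduct_mulVec (hz₁.differentiableAt two_ne_zero),
      cauchyGreen_eq_dotProduct_mulVec (hz₂.differentiableAt two_ne_zero), hz]
  refine eq_mul_inv_mulVec_of_vecMul_eq hC.self_of_nhds hdet (funext fun β => ?_)
  have key :=
    fderiv_fderiv_dotProduct_eq_of_cauchyGreen_eventuallyEq h₁ h₂ hCG w u (Pi.single β 1)
  rw [fderiv_apply_eq_jac_mulVec (h₁.differentiableAt two_ne_zero),
    fderiv_apply_eq_jac_mulVec (h₂.differentiableAt two_ne_zero), dotProduct_mulVec,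
    dotProduct_mulVec] at key
  simpa [dotProduct_single] using key

end Jacobian

def relativeRotation (y₁ y₂ : E3 → E3) (x : E3) : Matrix (Fin 3) (Fin 3) ℝ :=
  jac y₁ x * (jac y₂ x)⁻¹

section RelativeRotation

variable {y₁ y₂ : E3 → E3} {x : E3}

theorem relativeRotation_mul_jac (hdet : IsUnit (jac y₂ x).det) :
    relativeRotation y₁ y₂ x * jac y₂ x = jac y₁ x := by
  rw [relativeRotation, Matrix.mul_assoc, nonsing_inv_mul _ hdet, Matrix.mul_one]

theorem differentiableAt_relativeRotation (h₁ : ContDiffAt ℝ 2 y₁ x) (h₂ : ContDiffAt ℝ 2 y₂ x)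
    (hdet : IsUnit (jac y₂ x).det) : DifferentiableAt ℝ (relativeRotation y₁ y₂) x := by
  have hinv : relativeRotation y₁ y₂ = fun z => jac y₁ z * Ring.inverse (jac y₂ z) := by
    funext z
    rw [relativeRotation, nonsing_inv_eq_ringInverse]
  rw [hinv]
  exact (hasFDerivAt_jac h₁).differentiableAt.mul
    ((differentiableAt_inverse ((isUnit_iff_isUnit_det _).2 hdet)).comp x
      (hasFDerivAt_jac h₂).differentiableAt)

theorem fderiv_relativeRotation_eq_zero (h₁ : ContDiffAt ℝ 2 y₁ x) (h₂ : ContDiffAt ℝ 2 y₂ x)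
    (hdet : ∀ᶠ z in 𝓝 x, IsUnit (jac y₂ z).det)
    (hC : ∀ᶠ z in 𝓝 x, (jac y₁ z)ᵀ * jac y₁ z = (jac y₂ z)ᵀ * jac y₂ z) :
    fderiv ℝ (relativeRotation y₁ y₂) x = 0 := by
  have hmul : relativeRotation y₁ y₂ * jac y₂ =ᶠ[𝓝 x] jac y₁ := by
    filter_upwards [hdet] with z hz
    exact relativeRotation_mul_jac hz
  have hsecond : ∀ w, toMatrixCLM (fderiv ℝ (fderiv ℝ y₁) x w) =
      relativeRotation y₁ y₂ x * toMatrixCLM (fderiv ℝ (fderiv ℝ y₂) x w) := by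
    intro w
    ext i β
    simp [toMatrixCLM_apply, LinearMap.toMatrix'_apply, relativeRotation,
      fderiv_fderiv_eq_mul_inv_mulVec h₁ h₂ hdet.self_of_nhds hC w, mulVec, dotProduct,
      Matrix.mul_apply]
  exact (differentiableAt_relativeRotation h₁ h₂ hdet.self_of_nhds).hasFDerivAt
    |>.eq_zero_of_mul_eventuallyEq (hasFDerivAt_jac h₁) (hasFDerivAt_jac h₂) hmul
      ((isUnit_iff_isUnit_det _).2 hdet.self_of_nhds) hsecond

theorem relativeRotation_eq_of_isPreconnected {Ω : Set E3} (hΩ : IsOpen Ω)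
    (hΩc : IsPreconnected Ω) (h₁ : ContDiffOn ℝ 2 y₁ Ω) (h₂ : ContDiffOn ℝ 2 y₂ Ω)
    (hdet : ∀ x ∈ Ω, IsUnit (jac y₂ x).det)
    (hC : ∀ x ∈ Ω, (jac y₁ x)ᵀ * jac y₁ x = (jac y₂ x)ᵀ * jac y₂ x) {x₀ : E3}
    (hx : x ∈ Ω) (hx₀ : x₀ ∈ Ω) : relativeRotation y₁ y₂ x = relativeRotation y₁ y₂ x₀ := by
  have hc₁ : ∀ z ∈ Ω, ContDiffAt ℝ 2 y₁ z := fun z hz => h₁.contDiffAt (hΩ.mem_nhds hz)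
  have hc₂ : ∀ z ∈ Ω, ContDiffAt ℝ 2 y₂ z := fun z hz => h₂.contDiffAt (hΩ.mem_nhds hz)
  refine hΩ.is_const_of_fderiv_eq_zero (𝕜 := ℝ) hΩc (fun z hz => ?_) (fun z hz => ?_) hx hx₀
  · exact (differentiableAt_relativeRotation (hc₁ z hz) (hc₂ z hz) (hdet z hz))
      |>.differentiableWithinAt
  · exact fderiv_relativeRotation_eq_zero (hc₁ z hz) (hc₂ z hz)
      (eventually_of_mem (hΩ.mem_nhds hz) hdet) (eventually_of_mem (hΩ.mem_nhds hz) hC)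

end RelativeRotation

theorem exists_eqOn_mulVec_add_of_jac_eq_mul {Ω : Set E3} (hΩ : IsOpen Ω)
    (hΩc : IsPreconnected Ω) {y₁ y₂ : E3 → E3} (h₁ : DifferentiableOn ℝ y₁ Ω)
    (h₂ : DifferentiableOn ℝ y₂ Ω) {R : Matrix (Fin 3) (Fin 3) ℝ}
    (hR : ∀ x ∈ Ω, jac y₁ x = R * jac y₂ x) : ∃ t, ∀ x ∈ Ω, y₁ x = R *ᵥ y₂ x + t := by
  let L : E3 →L[ℝ] E3 := LinearMap.toContinuousLinearMap (Matrix.toLin' R)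
  have hd : ∀ x ∈ Ω, DifferentiableAt ℝ y₂ x := fun x hx => h₂.differentiableAt (hΩ.mem_nhds hx)
  have hL : ∀ x ∈ Ω, fderiv ℝ y₁ x = fderiv ℝ (L ∘ y₂) x := fun x hx => by
    rw [(L.hasFDerivAt.comp x (hd x hx).hasFDerivAt).fderiv]
    ext1 u
    rw [ContinuousLinearMap.comp_apply,
      fderiv_apply_eq_jac_mulVec (h₁.differentiableAt (hΩ.mem_nhds hx)),
      fderiv_apply_eq_jac_mulVec (hd x hx), hR x hx, ← mulVec_mulVec]
    rfl
  exact hΩ.exists_eq_add_of_fderiv_eq hΩc h₁ (L.differentiable.comp_differentiableOn h₂) hL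

/-- If two C² deformations of a connected open set `Ω ⊆ ℝ³` (Jacobians with positive
determinant) have the same right Cauchy–Green field `(Dy)ᵀ Dy` on `Ω`, then they are
rigidly related: `y₁ x = R y₂ x + t` on `Ω` with `R` a constant proper orthogonal matrix
and `t` a constant vector. -/
theorem weingarten_stmt1 (Ω : Set E3) (hΩ : IsOpen Ω) (hconn : IsConnected Ω)
    (y₁ y₂ : E3 → E3)
    (h₁ : ContDiffOn ℝ 2 y₁ Ω) (h₂ : ContDiffOn ℝ 2 y₂ Ω)
    (hdet₁ : ∀ x ∈ Ω, 0 < (jac y₁ x).det) (hdet₂ : ∀ x ∈ Ω, 0 < (jac y₂ x).det)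
    (hCG : ∀ x ∈ Ω, (jac y₁ x)ᵀ * jac y₁ x = (jac y₂ x)ᵀ * jac y₂ x) :
    ∃ (R : Matrix (Fin 3) (Fin 3) ℝ) (t : E3),
      Rᵀ * R = 1 ∧ R.det = 1 ∧
      ∀ x ∈ Ω, ∀ i : Fin 3, y₁ x i = (∑ j, R i j * y₂ x j) + t i := by
  obtain ⟨x₀, hx₀⟩ := hconn.nonempty
  have hunit : ∀ x ∈ Ω, IsUnit (jac y₂ x).det := fun x hx => (hdet₂ x hx).ne'.isUnit
  have hjac : ∀ x ∈ Ω, jac y₁ x = relativeRotation y₁ y₂ x₀ * jac y₂ x := fun x hx => by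
    rw [← relativeRotation_eq_of_isPreconnected hΩ hconn.isPreconnected h₁ h₂ hunit hCG hx hx₀,
      relativeRotation_mul_jac (hunit x hx)]
  obtain ⟨t, ht⟩ := exists_eqOn_mulVec_add_of_jac_eq_mul hΩ hconn.isPreconnected
    (h₁.differentiableOn two_ne_zero) (h₂.differentiableOn two_ne_zero) hjac
  exact ⟨_, t, transpose_mul_self_mul_inv (hCG x₀ hx₀) (hunit x₀ hx₀),
    det_mul_inv_eq_one (hCG x₀ hx₀) (hdet₁ x₀ hx₀) (hdet₂ x₀ hx₀),
    fun x hx i => congrFun (ht x hx) i⟩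
end
end

section
/- Let Ω ⊆ ℝ³ be an open set, let ε be a twice continuously differentiable symmetric 3×3 matrix field on Ω satisfying the St.-Venant compatibility condition, and set E_{ikl} := ε_{il,k} − ε_{kl,i}. If γ₀ and γ₁ are C¹ loops in Ω that are freely homotopic in Ω, then for all i,k ∈ {1,2,3}: ∫₀¹ Σ_l E_{ikl}(γ₀(t)) (γ₀)'_l(t) dt = ∫₀¹ Σ_l E_{ikl}(γ₁(t)) (γ₁)'_l(t) dt. Moreover, for any C¹ loop γ the 3×3 matrix with entries ω_{ik} := ∫₀¹ Σ_l E_{ikl}(γ(t)) γ'_l(t) dt is skew-symmetric. -/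
noncomputable section

open Matrix

/-- The St.-Venant compatibility condition for a matrix field `ε` on `Ω`. -/
def StVenant (ε : Fin 3 → Fin 3 → E3 → ℝ) (Ω : Set E3) : Prop :=
  ∀ x ∈ Ω, ∀ i k l m : Fin 3,
    pd m (pd k (ε i l)) x - pd m (pd i (ε k l)) x
      - pd l (pd k (ε i m)) x + pd l (pd i (ε k m)) x = 0

/-- The field `E_{ikl} := ε_{il,k} − ε_{kl,i}` derived from a strain field `ε`. -/
noncomputable def Efield (ε : Fin 3 → Fin 3 → E3 → ℝ) (i k l : Fin 3) (x : E3) : ℝ :=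
  pd k (ε i l) x - pd i (ε k l) x

/-- A C¹ loop in `Ω`: a continuously differentiable map `γ : [0,1] → Ω` with `γ 0 = γ 1`. -/
def IsC1LoopIn (γ : ℝ → E3) (Ω : Set E3) : Prop :=
  ContDiffOn ℝ 1 γ (Set.Icc 0 1) ∧ (∀ t ∈ Set.Icc (0:ℝ) 1, γ t ∈ Ω) ∧ γ 0 = γ 1

/-- Free homotopy of loops within `Ω`. -/
def FreelyHomotopicIn (γ₀ γ₁ : ℝ → E3) (Ω : Set E3) : Prop :=
  ∃ Hom : ℝ × ℝ → E3,
    ContinuousOn Hom (Set.Icc 0 1 ×ˢ Set.Icc 0 1) ∧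
    (∀ p ∈ (Set.Icc (0:ℝ) 1 ×ˢ Set.Icc (0:ℝ) 1), Hom p ∈ Ω) ∧
    (∀ t ∈ Set.Icc (0:ℝ) 1, Hom (0, t) = γ₀ t) ∧
    (∀ t ∈ Set.Icc (0:ℝ) 1, Hom (1, t) = γ₁ t) ∧
    (∀ s ∈ Set.Icc (0:ℝ) 1, Hom (s, 0) = Hom (s, 1))

/-!
For fixed `i, k`, the St.-Venant condition says exactly that the 1-form `Σ_l E_{ikl} dx_l` is
closed, so by the Poincaré lemma it has a primitive on every ball contained in `Ω`. A free
homotopy `H` is uniformly continuous on the unit square, so for a fine enough grid every grid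
cell is mapped into a ball of a fixed radius inside `Ω`. Along each row of the grid the loop
integral then equals the integral over the inscribed closed polygon, and the polygon integrals
of two neighbouring rows differ by a telescoping sum of integrals around quadrilaterals lying in
such balls, which vanish. Skew-symmetry holds already pointwise: `E_{kil} = -E_{ikl}`.
-/

open Metric Set intervalIntegral AffineMap

structure IsFinePartition (T : ℕ → ℝ) (n : ℕ) (η : ℝ) : Prop where
  monotone : Monotone T
  zero : T 0 = 0
  last : T n = 1
  sub_le : ∀ b < n, T (b + 1) - T b ≤ η

namespace IsFinePartition

variable {T : ℕ → ℝ} {n b : ℕ} {η : ℝ} (hT : IsFinePartition T n η)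
include hT

theorem mem_Icc {j : ℕ} (hj : j ≤ n) : T j ∈ Icc (0:ℝ) 1 :=
  ⟨hT.zero ▸ hT.monotone j.zero_le, hT.last ▸ hT.monotone hj⟩

theorem Icc_subset (hb : b < n) : Icc (T b) (T (b + 1)) ⊆ Icc 0 1 :=
  Icc_subset_Icc (hT.mem_Icc hb.le).1 (hT.mem_Icc hb).2

theorem left_mem (b : ℕ) : T b ∈ Icc (T b) (T (b + 1)) :=
  left_mem_Icc.mpr (hT.monotone b.le_succ)

theorem right_mem (b : ℕ) : T (b + 1) ∈ Icc (T b) (T (b + 1)) :=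
  right_mem_Icc.mpr (hT.monotone b.le_succ)

theorem abs_sub_le (hb : b < n) {t t' : ℝ} (ht : t ∈ Icc (T b) (T (b + 1)))
    (ht' : t' ∈ Icc (T b) (T (b + 1))) : |t - t'| ≤ η := by
  have := hT.sub_le b hb
  exact abs_sub_le_iff.mpr ⟨by linarith [ht.2, ht'.1], by linarith [ht.1, ht'.2]⟩

theorem nonneg (hb : b < n) : 0 ≤ η :=
  (abs_nonneg _).trans (hT.abs_sub_le hb (hT.left_mem b) (hT.left_mem b))

end IsFinePartition

theorem isFinePartition_div {n : ℕ} (hn : 0 < n) :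
    IsFinePartition (fun j : ℕ => (j / n : ℝ)) n (1 / n) where
  monotone _ _ h := by dsimp only; gcongr
  zero := by simp
  last := div_self (Nat.cast_ne_zero.mpr hn.ne')
  sub_le b _ := by rw [Nat.cast_succ, ← sub_div, add_sub_cancel_left]

theorem mem_ball_of_isFinePartition {E : Type*} [PseudoMetricSpace E] {H : ℝ × ℝ → E}
    {T : ℕ → ℝ} {n b : ℕ} {η ρ : ℝ} (hT : IsFinePartition T n η)
    (hmesh : ∀ s ∈ Icc (0:ℝ) 1, ∀ s' ∈ Icc (0:ℝ) 1, ∀ t ∈ Icc (0:ℝ) 1, ∀ t' ∈ Icc (0:ℝ) 1,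
      |s - s'| ≤ η → |t - t'| ≤ η → H (s', t') ∈ ball (H (s, t)) ρ)
    (hb : b < n) {s σ : ℝ} (hs : s ∈ Icc (0:ℝ) 1) (hσ : σ ∈ Icc (0:ℝ) 1) (hsσ : |s - σ| ≤ η)
    {u : ℝ} (hu : u ∈ Icc (T b) (T (b + 1))) : H (σ, u) ∈ ball (H (s, T b)) ρ :=
  hmesh s hs σ hσ _ (hT.mem_Icc hb.le) u (hT.Icc_subset hb hu) hsσ
    (hT.abs_sub_le hb (hT.left_mem b) hu)

section ClosedForm

variable {E F : Type*} [NormedAddCommGroup E] [NormedSpace ℝ E]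
  [NormedAddCommGroup F] [NormedSpace ℝ F] {ω : E → E →L[ℝ] F} {Ω : Set E} {f : E → F}

theorem curveIntegral_segment_eq_sub [CompleteSpace F] {s : Set E} (hs : Convex ℝ s)
    (hω : ContinuousOn ω s) (hf : ∀ x ∈ s, HasFDerivAt f (ω x) x) {a b : E} (ha : a ∈ s)
    (hb : b ∈ s) :
    ∫ᶜ x in .segment a b, ω x = f b - f a := by
  have hseg : MapsTo (lineMap a b) (Icc (0:ℝ) 1) s := fun u hu => hs.lineMap_mem ha hb hu
  have hcont : ContinuousOn (fun u : ℝ => ω (lineMap a b u) (b - a)) (uIcc 0 1) := by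
    rw [uIcc_of_le zero_le_one]
    exact (hω.comp (by fun_prop) hseg).clm_apply continuousOn_const
  have hderiv : ∀ u ∈ uIcc (0:ℝ) 1,
      HasDerivAt (fun u => f (lineMap a b u)) (ω (lineMap a b u) (b - a)) u := by
    intro u hu
    rw [uIcc_of_le zero_le_one] at hu
    exact (hf _ (hseg hu)).comp_hasDerivAt u hasDerivAt_lineMap
  rw [curveIntegral_segment, integral_eq_sub_of_hasDerivAt hderiv hcont.intervalIntegrable]
  simp

theorem continuousOn_apply_derivWithin {γ : ℝ → E} (hγ : ContDiffOn ℝ 1 γ (Icc 0 1))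
    {s : Set E} (hω : ContinuousOn ω s) {u v : ℝ} (hu : 0 ≤ u) (hv : v ≤ 1)
    (hγs : MapsTo γ (Icc u v) s) :
    ContinuousOn (fun t => ω (γ t) (derivWithin γ (Icc 0 1) t)) (Icc u v) := by
  have hsub : Icc u v ⊆ Icc 0 1 := Icc_subset_Icc hu hv
  refine (hω.comp (hγ.continuousOn.mono hsub) hγs).clm_apply ?_
  exact (hγ.continuousOn_derivWithin uniqueDiffOn_Icc_zero_one le_rfl).mono hsub

theorem integral_apply_derivWithin_eq_sub [CompleteSpace F] {s : Set E} (hω : ContinuousOn ω s)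
    (hf : ∀ x ∈ s, HasFDerivAt f (ω x) x) {γ : ℝ → E} (hγ : ContDiffOn ℝ 1 γ (Icc 0 1))
    {u v : ℝ} (huv : u ≤ v) (hu : 0 ≤ u) (hv : v ≤ 1) (hγs : MapsTo γ (Icc u v) s) :
    ∫ t in u..v, ω (γ t) (derivWithin γ (Icc 0 1) t) = f (γ v) - f (γ u) := by
  have hsub : Icc u v ⊆ Icc 0 1 := Icc_subset_Icc hu hv
  refine integral_eq_sub_of_hasDerivAt_of_le (f := f ∘ γ) huv ?_ (fun t ht => ?_) ?_
  · have hfc : ContinuousOn f s := fun x hx => (hf x hx).continuousAt.continuousWithinAt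
    exact hfc.comp (hγ.continuousOn.mono hsub) hγs
  · have ht01 : Icc (0:ℝ) 1 ∈ nhds t := Icc_mem_nhds (hu.trans_lt ht.1) (ht.2.trans_le hv)
    have hγt : HasDerivAt γ (derivWithin γ (Icc 0 1) t) t := by
      rw [derivWithin_of_mem_nhds ht01]
      exact ((hγ.differentiableOn one_ne_zero).differentiableAt ht01).hasDerivAt
    exact (hf _ (hγs (Ioo_subset_Icc_self ht))).comp_hasDerivAt t hγt
  · exact (continuousOn_apply_derivWithin hγ hω hu hv hγs).intervalIntegrable_of_Icc huv

theorem integral_apply_deriv_eq_integral_apply_derivWithin (γ : ℝ → E) :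
    ∫ t in (0:ℝ)..1, ω (γ t) (deriv γ t) =
      ∫ t in (0:ℝ)..1, ω (γ t) (derivWithin γ (Icc 0 1) t) := by
  refine integral_congr_ae_restrict ?_
  rw [uIoc_of_le zero_le_one, ← MeasureTheory.restrict_Ioo_eq_restrict_Ioc]
  filter_upwards [MeasureTheory.ae_restrict_mem measurableSet_Ioo] with t ht
  rw [derivWithin_of_mem_nhds (Icc_mem_nhds ht.1 ht.2)]

variable (ω) in
def polygonIntegral (p : ℕ → E) (n : ℕ) : F :=
  ∑ b ∈ Finset.range n, ∫ᶜ x in .segment (p b) (p (b + 1)), ω x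

theorem polygonIntegral_congr {p q : ℕ → E} {n : ℕ} (h : ∀ b ≤ n, p b = q b) :
    polygonIntegral ω p n = polygonIntegral ω q n :=
  Finset.sum_congr rfl fun b hb => by
    have hb := Finset.mem_range.mp hb
    rw [h b hb.le, h (b + 1) hb]

variable [CompleteSpace F] (hω : DifferentiableOn ℝ ω Ω)
  (hdω : ∀ x ∈ Ω, ∀ u v, fderiv ℝ ω x u v = fderiv ℝ ω x v u)
include hω hdω

section Ball

variable {z : E} {r : ℝ} (hB : ball z r ⊆ Ω)
include hB

theorem exists_hasFDerivAt_of_ball_subset :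
    ∃ f : E → F, ∀ x ∈ ball z r, HasFDerivAt f (ω x) x :=
  (convex_ball z r).exists_forall_hasFDerivAt_of_fderiv_symmetric isOpen_ball (hω.mono hB)
    fun x hx => hdω x (hB hx)

theorem curveIntegral_segment_sub_curveIntegral_segment {a b c d : E} (ha : a ∈ ball z r)
    (hb : b ∈ ball z r) (hc : c ∈ ball z r) (hd : d ∈ ball z r) :
    ∫ᶜ x in .segment a b, ω x - ∫ᶜ x in .segment c d, ω x =
      ∫ᶜ x in .segment a c, ω x - ∫ᶜ x in .segment b d, ω x := by
  obtain ⟨f, hf⟩ := exists_hasFDerivAt_of_ball_subset hω hdω hB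
  simp only [curveIntegral_segment_eq_sub (convex_ball z r) (hω.continuousOn.mono hB) hf, *]
  abel

theorem integral_apply_derivWithin_eq_curveIntegral_segment {γ : ℝ → E}
    (hγ : ContDiffOn ℝ 1 γ (Icc 0 1)) {u v : ℝ} (huv : u ≤ v) (hu : 0 ≤ u) (hv : v ≤ 1)
    (hγB : MapsTo γ (Icc u v) (ball z r)) :
    ∫ t in u..v, ω (γ t) (derivWithin γ (Icc 0 1) t) = ∫ᶜ x in .segment (γ u) (γ v), ω x := by
  obtain ⟨f, hf⟩ := exists_hasFDerivAt_of_ball_subset hω hdω hB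
  have hωB := hω.continuousOn.mono hB
  rw [integral_apply_derivWithin_eq_sub hωB hf hγ huv hu hv hγB,
    curveIntegral_segment_eq_sub (convex_ball z r) hωB hf (hγB ⟨le_rfl, huv⟩) (hγB ⟨huv, le_rfl⟩)]

end Ball

theorem integral_apply_derivWithin_eq_polygonIntegral {γ : ℝ → E}
    (hγ : ContDiffOn ℝ 1 γ (Icc 0 1)) {T : ℕ → ℝ} (hT : Monotone T) {n : ℕ} (hT0 : T 0 = 0)
    (hTn : T n = 1) {z : ℕ → E} {r : ℝ} (hB : ∀ b < n, ball (z b) r ⊆ Ω)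
    (hγB : ∀ b < n, MapsTo γ (Icc (T b) (T (b + 1))) (ball (z b) r)) :
    ∫ t in (0:ℝ)..1, ω (γ t) (derivWithin γ (Icc 0 1) t) = polygonIntegral ω (γ ∘ T) n := by
  have hT01 : ∀ b < n, 0 ≤ T b ∧ T (b + 1) ≤ 1 := fun b hb =>
    ⟨hT0 ▸ hT (Nat.zero_le b), hTn ▸ hT hb⟩
  have hsplit := sum_integral_adjacent_intervals (μ := MeasureTheory.volume)
    (f := fun t => ω (γ t) (derivWithin γ (Icc 0 1) t)) (a := T) (n := n) fun b hb =>
      (continuousOn_apply_derivWithin hγ (hω.continuousOn.mono (hB b hb)) (hT01 b hb).1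
        (hT01 b hb).2 (hγB b hb)).intervalIntegrable_of_Icc (hT b.le_succ)
  rw [hT0, hTn] at hsplit
  rw [← hsplit, polygonIntegral]
  refine Finset.sum_congr rfl fun b hb => ?_
  have hb := Finset.mem_range.mp hb
  exact integral_apply_derivWithin_eq_curveIntegral_segment hω hdω (hB b hb) hγ (hT b.le_succ)
    (hT01 b hb).1 (hT01 b hb).2 (hγB b hb)

theorem polygonIntegral_eq_of_subset_ball {n : ℕ} {p q z : ℕ → E} {r : ℝ}
    (hB : ∀ b < n, ball (z b) r ⊆ Ω)
    (hpq : ∀ b < n, ({p b, p (b + 1), q b, q (b + 1)} : Set E) ⊆ ball (z b) r)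
    (hp : p n = p 0) (hq : q n = q 0) :
    polygonIntegral ω p n = polygonIntegral ω q n := by
  set g : ℕ → F := fun b => ∫ᶜ x in .segment (p b) (q b), ω x
  rw [← sub_eq_zero, polygonIntegral, polygonIntegral, ← Finset.sum_sub_distrib]
  calc ∑ b ∈ Finset.range n, (∫ᶜ x in .segment (p b) (p (b + 1)), ω x -
        ∫ᶜ x in .segment (q b) (q (b + 1)), ω x)
      = ∑ b ∈ Finset.range n, (g b - g (b + 1)) := by
        refine Finset.sum_congr rfl fun b hb => ?_
        have hb := Finset.mem_range.mp hb
        simp only [insert_subset_iff, singleton_subset_iff] at hpq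
        obtain ⟨h₀, h₁, h₂, h₃⟩ := hpq b hb
        exact curveIntegral_segment_sub_curveIntegral_segment hω hdω (hB b hb) h₀ h₁ h₂ h₃
    _ = g 0 - g n := Finset.sum_range_sub' g n
    _ = 0 := by simp only [g]; rw [hp, hq, sub_self]

section Mesh

variable {H : ℝ × ℝ → E} {T : ℕ → ℝ} {n : ℕ} {η ρ : ℝ} (hT : IsFinePartition T n η)
  (hB : ∀ s ∈ Icc (0:ℝ) 1, ∀ t ∈ Icc (0:ℝ) 1, ball (H (s, t)) ρ ⊆ Ω)
  (hmesh : ∀ s ∈ Icc (0:ℝ) 1, ∀ s' ∈ Icc (0:ℝ) 1, ∀ t ∈ Icc (0:ℝ) 1, ∀ t' ∈ Icc (0:ℝ) 1,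
    |s - s'| ≤ η → |t - t'| ≤ η → H (s', t') ∈ ball (H (s, t)) ρ)
include hT hB hmesh

theorem integral_apply_derivWithin_eq_polygonIntegral_of_mesh {s : ℝ} (hs : s ∈ Icc (0:ℝ) 1)
    {γ : ℝ → E} (hγ : ContDiffOn ℝ 1 γ (Icc 0 1)) (hHγ : ∀ t ∈ Icc (0:ℝ) 1, H (s, t) = γ t) :
    ∫ t in (0:ℝ)..1, ω (γ t) (derivWithin γ (Icc 0 1) t) =
      polygonIntegral ω (fun b => H (s, T b)) n := by
  rw [integral_apply_derivWithin_eq_polygonIntegral hω hdω hγ hT.monotone hT.zero hT.last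
    (fun b hb => hB s hs _ (hT.mem_Icc hb.le))]
  · exact polygonIntegral_congr fun b hb => (hHγ _ (hT.mem_Icc hb)).symm
  · intro b hb t ht
    rw [← hHγ t (hT.Icc_subset hb ht)]
    have hss : |s - s| ≤ η := by simpa using hT.nonneg hb
    exact mem_ball_of_isFinePartition hT hmesh hb hs hs hss ht

theorem polygonIntegral_eq_of_mesh {s s' : ℝ} (hs : s ∈ Icc (0:ℝ) 1) (hs' : s' ∈ Icc (0:ℝ) 1)
    (hss' : |s - s'| ≤ η) (hloop : H (s, 0) = H (s, 1)) (hloop' : H (s', 0) = H (s', 1)) :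
    polygonIntegral ω (fun b => H (s, T b)) n = polygonIntegral ω (fun b => H (s', T b)) n := by
  refine polygonIntegral_eq_of_subset_ball hω hdω (z := fun b => H (s, T b))
    (fun b hb => hB s hs _ (hT.mem_Icc hb.le)) (fun b hb => ?_)
    (by simp only [hT.last, hT.zero, hloop]) (by simp only [hT.last, hT.zero, hloop'])
  have hss : |s - s| ≤ η := by simpa using hT.nonneg hb
  have hnear : ∀ σ ∈ Icc (0:ℝ) 1, |s - σ| ≤ η → ∀ u ∈ Icc (T b) (T (b + 1)),
      H (σ, u) ∈ ball (H (s, T b)) ρ := fun σ hσ hsσ u hu =>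
    mem_ball_of_isFinePartition hT hmesh hb hs hσ hsσ hu
  simp only [insert_subset_iff, singleton_subset_iff]
  exact ⟨hnear s hs hss _ (hT.left_mem b), hnear s hs hss _ (hT.right_mem b),
    hnear s' hs' hss' _ (hT.left_mem b), hnear s' hs' hss' _ (hT.right_mem b)⟩

theorem integral_apply_derivWithin_eq_of_mesh {γ₀ γ₁ : ℝ → E}
    (hγ₀ : ContDiffOn ℝ 1 γ₀ (Icc 0 1)) (hγ₁ : ContDiffOn ℝ 1 γ₁ (Icc 0 1))
    (hH₀ : ∀ t ∈ Icc (0:ℝ) 1, H (0, t) = γ₀ t) (hH₁ : ∀ t ∈ Icc (0:ℝ) 1, H (1, t) = γ₁ t)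
    (hHloop : ∀ s ∈ Icc (0:ℝ) 1, H (s, 0) = H (s, 1)) :
    ∫ t in (0:ℝ)..1, ω (γ₀ t) (derivWithin γ₀ (Icc 0 1) t) =
      ∫ t in (0:ℝ)..1, ω (γ₁ t) (derivWithin γ₁ (Icc 0 1) t) := by
  set R : ℕ → F := fun a => polygonIntegral ω (fun b => H (T a, T b)) n
  have hR : ∀ a < n, R (a + 1) - R a = 0 := fun a ha => by
    refine sub_eq_zero.mpr (polygonIntegral_eq_of_mesh hω hdω hT hB hmesh (hT.mem_Icc ha)
      (hT.mem_Icc ha.le) ?_ (hHloop _ (hT.mem_Icc ha)) (hHloop _ (hT.mem_Icc ha.le)))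
    exact hT.abs_sub_le ha (hT.right_mem a) (hT.left_mem a)
  have hR0n : R 0 = R n := by
    have htel := Finset.sum_range_sub R n
    rw [Finset.sum_eq_zero fun a ha => hR a (Finset.mem_range.mp ha)] at htel
    exact (sub_eq_zero.mp htel.symm).symm
  simp only [R, hT.zero, hT.last] at hR0n
  rw [integral_apply_derivWithin_eq_polygonIntegral_of_mesh hω hdω hT hB hmesh
      (left_mem_Icc.mpr zero_le_one) hγ₀ hH₀,
    integral_apply_derivWithin_eq_polygonIntegral_of_mesh hω hdω hT hB hmesh
      (right_mem_Icc.mpr zero_le_one) hγ₁ hH₁, hR0n]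

end Mesh

theorem integral_apply_deriv_eq_of_homotopy (hΩ : IsOpen Ω) {γ₀ γ₁ : ℝ → E}
    (hγ₀ : ContDiffOn ℝ 1 γ₀ (Icc 0 1)) (hγ₁ : ContDiffOn ℝ 1 γ₁ (Icc 0 1)) {H : ℝ × ℝ → E}
    (hHc : ContinuousOn H (Icc (0:ℝ) 1 ×ˢ Icc (0:ℝ) 1))
    (hHΩ : MapsTo H (Icc (0:ℝ) 1 ×ˢ Icc (0:ℝ) 1) Ω)
    (hH₀ : ∀ t ∈ Icc (0:ℝ) 1, H (0, t) = γ₀ t) (hH₁ : ∀ t ∈ Icc (0:ℝ) 1, H (1, t) = γ₁ t)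
    (hHloop : ∀ s ∈ Icc (0:ℝ) 1, H (s, 0) = H (s, 1)) :
    ∫ t in (0:ℝ)..1, ω (γ₀ t) (deriv γ₀ t) = ∫ t in (0:ℝ)..1, ω (γ₁ t) (deriv γ₁ t) := by
  have hQ : IsCompact (Icc (0:ℝ) 1 ×ˢ Icc (0:ℝ) 1) := isCompact_Icc.prod isCompact_Icc
  obtain ⟨ρ, hρ, hρΩ⟩ :=
    (hQ.image_of_continuousOn hHc).exists_thickening_subset_open hΩ hHΩ.image_subset
  obtain ⟨δ, hδ, hHδ⟩ :=
    Metric.uniformContinuousOn_iff.mp (hQ.uniformContinuousOn_of_continuous hHc) ρ hρ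
  obtain ⟨n, hn⟩ := exists_nat_one_div_lt hδ
  rw [integral_apply_deriv_eq_integral_apply_derivWithin,
    integral_apply_deriv_eq_integral_apply_derivWithin]
  refine integral_apply_derivWithin_eq_of_mesh hω hdω (isFinePartition_div n.succ_pos)
    (fun s hs t ht =>
      (ball_subset_thickening (mem_image_of_mem H (mk_mem_prod hs ht)) ρ).trans hρΩ)
    (fun s hs s' hs' t ht t' ht' hss' htt' => ?_) hγ₀ hγ₁ hH₀ hH₁ hHloop
  refine hHδ _ (mk_mem_prod hs' ht') _ (mk_mem_prod hs ht)
    (lt_of_le_of_lt ?_ (by exact_mod_cast hn))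
  rw [Prod.dist_eq, Real.dist_eq, Real.dist_eq, abs_sub_comm s', abs_sub_comm t']
  exact max_le hss' htt'

end ClosedForm

section OneForm

variable {ι : Type*} [Fintype ι]

def oneForm (F : ι → (ι → ℝ) → ℝ) (x : ι → ℝ) : (ι → ℝ) →L[ℝ] ℝ :=
  ∑ l, F l x • (ContinuousLinearMap.proj l : (ι → ℝ) →L[ℝ] ℝ)

@[simp] theorem oneForm_apply (F : ι → (ι → ℝ) → ℝ) (x v : ι → ℝ) :
    oneForm F x v = ∑ l, F l x * v l := by
  simp [oneForm]

theorem hasFDerivAt_oneForm {F : ι → (ι → ℝ) → ℝ} {x : ι → ℝ}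
    (hF : ∀ l, DifferentiableAt ℝ (F l) x) :
    HasFDerivAt (oneForm F)
      (∑ l, (fderiv ℝ (F l) x).smulRight (ContinuousLinearMap.proj l : (ι → ℝ) →L[ℝ] ℝ)) x :=
  HasFDerivAt.fun_sum fun l _ =>
    (hF l).hasFDerivAt.smul_const (ContinuousLinearMap.proj l : (ι → ℝ) →L[ℝ] ℝ)

theorem fderiv_oneForm_apply [DecidableEq ι] {F : ι → (ι → ℝ) → ℝ} {x : ι → ℝ}
    (hF : ∀ l, DifferentiableAt ℝ (F l) x) (u v : ι → ℝ) :
    fderiv ℝ (oneForm F) x u v = ∑ l, ∑ m, u m * fderiv ℝ (F l) x (Pi.single m 1) * v l := by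
  simp only [(hasFDerivAt_oneForm hF).fderiv, FunLike.coe_sum, Finset.sum_apply,
    ContinuousLinearMap.smulRight_apply]
  refine Finset.sum_congr rfl fun l _ => ?_
  conv_lhs => rw [pi_eq_sum_univ' u]
  simp [map_sum, Finset.sum_mul]

theorem fderiv_oneForm_apply_comm [DecidableEq ι] {F : ι → (ι → ℝ) → ℝ} {x : ι → ℝ}
    (hF : ∀ l, DifferentiableAt ℝ (F l) x)
    (hcurl : ∀ l m, fderiv ℝ (F l) x (Pi.single m 1) = fderiv ℝ (F m) x (Pi.single l 1))
    (u v : ι → ℝ) :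
    fderiv ℝ (oneForm F) x u v = fderiv ℝ (oneForm F) x v u := by
  rw [fderiv_oneForm_apply hF, fderiv_oneForm_apply hF, Finset.sum_comm]
  refine Finset.sum_congr rfl fun l _ => Finset.sum_congr rfl fun m _ => ?_
  rw [hcurl m l]
  ring

end OneForm

theorem differentiableAt_pd {f : E3 → ℝ} {x : E3} (hf : ContDiffAt ℝ 2 f x) (j : Fin 3) :
    DifferentiableAt ℝ (pd j f) x :=
  ((hf.fderiv_right (m := 1) (by norm_num)).differentiableAt (by norm_num)).clm_apply
    (differentiableAt_const _)

section StrainField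

variable {Ω : Set E3} {ε : Fin 3 → Fin 3 → E3 → ℝ} (hΩ : IsOpen Ω)
  (hreg : ∀ i j, ContDiffOn ℝ 2 (ε i j) Ω)
include hΩ hreg

theorem differentiableAt_Efield {x : E3} (hx : x ∈ Ω) (i k l : Fin 3) :
    DifferentiableAt ℝ (Efield ε i k l) x :=
  have hε : ∀ i j, ContDiffAt ℝ 2 (ε i j) x := fun i j => (hreg i j).contDiffAt (hΩ.mem_nhds hx)
  (differentiableAt_pd (hε i l) k).sub (differentiableAt_pd (hε k l) i)

theorem pd_Efield_comm (hSV : StVenant ε Ω) {x : E3} (hx : x ∈ Ω) (i k l m : Fin 3) :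
    pd m (Efield ε i k l) x = pd l (Efield ε i k m) x := by
  have hε : ∀ i j, ContDiffAt ℝ 2 (ε i j) x := fun i j => (hreg i j).contDiffAt (hΩ.mem_nhds hx)
  have hpd : ∀ l m, pd m (Efield ε i k l) x = pd m (pd k (ε i l)) x - pd m (pd i (ε k l)) x :=
    fun l m => by
      change fderiv ℝ (fun y => pd k (ε i l) y - pd i (ε k l) y) x _ = _
      rw [fderiv_fun_sub (differentiableAt_pd (hε i l) k) (differentiableAt_pd (hε k l) i)]
      rfl
  rw [hpd, hpd]
  linarith [hSV x hx i k l m]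

theorem differentiableOn_oneForm_Efield (i k : Fin 3) :
    DifferentiableOn ℝ (oneForm (Efield ε i k)) Ω := fun _ hx =>
  (hasFDerivAt_oneForm (differentiableAt_Efield hΩ hreg hx i k)).differentiableAt
    |>.differentiableWithinAt

theorem fderiv_oneForm_Efield_apply_comm (hSV : StVenant ε Ω) (i k : Fin 3) :
    ∀ x ∈ Ω, ∀ u v,
      fderiv ℝ (oneForm (Efield ε i k)) x u v = fderiv ℝ (oneForm (Efield ε i k)) x v u :=
  fun _ hx => fderiv_oneForm_apply_comm (differentiableAt_Efield hΩ hreg hx i k)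
    (fun l m => pd_Efield_comm hΩ hreg hSV hx i k l m)

end StrainField

theorem Efield_swap (ε : Fin 3 → Fin 3 → E3 → ℝ) (i k l : Fin 3) (x : E3) :
    Efield ε k i l x = -Efield ε i k l x :=
  (neg_sub _ _).symm

theorem weingarten_stmt5_general (Ω : Set E3) (hΩ : IsOpen Ω)
    (ε : Fin 3 → Fin 3 → E3 → ℝ)
    (hreg : ∀ i j, ContDiffOn ℝ 2 (ε i j) Ω)
    (hSV : StVenant ε Ω) :
    (∀ γ₀ γ₁ : ℝ → E3, IsC1LoopIn γ₀ Ω → IsC1LoopIn γ₁ Ω →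
      FreelyHomotopicIn γ₀ γ₁ Ω →
      ∀ i k : Fin 3,
        (∫ t in (0:ℝ)..1, ∑ l, Efield ε i k l (γ₀ t) * deriv γ₀ t l) =
        (∫ t in (0:ℝ)..1, ∑ l, Efield ε i k l (γ₁ t) * deriv γ₁ t l)) ∧
    (∀ γ : ℝ → E3, IsC1LoopIn γ Ω →
      ∀ i k : Fin 3,
        (∫ t in (0:ℝ)..1, ∑ l, Efield ε i k l (γ t) * deriv γ t l) =
        -(∫ t in (0:ℝ)..1, ∑ l, Efield ε k i l (γ t) * deriv γ t l)) := by
  refine ⟨?_, fun γ _ i k => ?_⟩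
  · rintro γ₀ γ₁ ⟨hγ₀, -⟩ ⟨hγ₁, -⟩ ⟨H, hHc, hHΩ, hH₀, hH₁, hHloop⟩ i k
    simpa only [oneForm_apply] using integral_apply_deriv_eq_of_homotopy
      (differentiableOn_oneForm_Efield hΩ hreg i k)
      (fderiv_oneForm_Efield_apply_comm hΩ hreg hSV i k)
      hΩ hγ₀ hγ₁ hHc hHΩ hH₀ hH₁ hHloop
  · simp only [Efield_swap ε i k, neg_mul, Finset.sum_neg_distrib, intervalIntegral.integral_neg,
      neg_neg]

/-- For a C² symmetric matrix field `ε` on an open set `Ω ⊆ ℝ³` satisfying St.-Venant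
compatibility, with `E_{ikl} := ε_{il,k} − ε_{kl,i}`: the loop integral
`∫₀¹ Σ_l E_{ikl}(γ(t)) γ'_l(t) dt` is the same for freely homotopic C¹ loops, and for
any C¹ loop the resulting matrix `ω` is skew-symmetric. -/
theorem weingarten_stmt5 (Ω : Set E3) (hΩ : IsOpen Ω)
    (ε : Fin 3 → Fin 3 → E3 → ℝ)
    (hreg : ∀ i j, ContDiffOn ℝ 2 (ε i j) Ω)
    (hsym : ∀ i j, ∀ x ∈ Ω, ε i j x = ε j i x)
    (hSV : StVenant ε Ω) :
    (∀ γ₀ γ₁ : ℝ → E3, IsC1LoopIn γ₀ Ω → IsC1LoopIn γ₁ Ω →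
      FreelyHomotopicIn γ₀ γ₁ Ω →
      ∀ i k : Fin 3,
        (∫ t in (0:ℝ)..1, ∑ l, Efield ε i k l (γ₀ t) * deriv γ₀ t l) =
        (∫ t in (0:ℝ)..1, ∑ l, Efield ε i k l (γ₁ t) * deriv γ₁ t l)) ∧
    (∀ γ : ℝ → E3, IsC1LoopIn γ Ω →
      ∀ i k : Fin 3,
        (∫ t in (0:ℝ)..1, ∑ l, Efield ε i k l (γ t) * deriv γ t l) =
        -(∫ t in (0:ℝ)..1, ∑ l, Efield ε k i l (γ t) * deriv γ t l)) :=
  weingarten_stmt5_general Ω hΩ ε hreg hSV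
end
end

section
/- Let Ω ⊆ ℝ³ be a connected open set, let C be a twice continuously differentiable positive-definite symmetric 3×3 matrix field on Ω with Christoffel symbols Γ, and let F : Ω → ℝ^{3×3} be a continuously differentiable matrix field solving the Pfaffian system F_{iα,β} = Σ_ρ Γ^ρ_{αβ} F_{iρ} on Ω. If F(x₀)ᵀ F(x₀) = C(x₀) at some point x₀ ∈ Ω, then F(x)ᵀ F(x) = C(x) for every x ∈ Ω. -/
noncomputable section

open Matrix

/-- The Christoffel symbols `Γ^γ_{αβ}` of a positive-definite symmetric matrix field `C`:
`Γ^γ_{αβ} = ½ Σ_μ (C⁻¹)^{γμ}(C_{αμ,β} + C_{βμ,α} − C_{αβ,μ})`. -/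
noncomputable def christoffel (C : E3 → Matrix (Fin 3) (Fin 3) ℝ)
    (γ α β : Fin 3) (x : E3) : ℝ :=
  (1 / 2) * ∑ μ, (C x)⁻¹ γ μ *
    (pd β (fun y => C y α μ) x + pd α (fun y => C y β μ) x - pd μ (fun y => C y α β) x)

/-- `F` solves the Pfaffian system associated with `C` on `Ω`:
`F_{iα,β} = Σ_ρ Γ^ρ_{αβ} F_{iρ}` on `Ω`. -/
def SolvesPfaffian (C F : E3 → Matrix (Fin 3) (Fin 3) ℝ) (Ω : Set E3) : Prop :=
  ∀ x ∈ Ω, ∀ i α β : Fin 3,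
    pd β (fun y => F y i α) x = ∑ ρ, christoffel C ρ α β x * F x i ρ

/-! The defect `G = FᵀF - C` vanishes at `x₀`. The Pfaffian system `∂_β F = F Γ_β` and the metric
compatibility `∂_β C = Γ_βᵀ C + C Γ_β` of the Christoffel symbols show that `G` solves the linear
homogeneous system `∂_β G = Γ_βᵀ G + G Γ_β`, so `‖DG‖ ≤ K ‖G‖` with `K` continuous. By Grönwall's
inequality along segments, the set of points near which `G` vanishes is open and relatively closed
in `Ω`, hence all of `Ω`. -/

open Set Filter Topology Metric
open scoped Matrix.Norms.Operator

section LinearPfaffianUniqueness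

variable {E V : Type*} [NormedAddCommGroup E] [NormedSpace ℝ E]
  [NormedAddCommGroup V] [NormedSpace ℝ V] {G : E → V}

theorem ContinuousLinearMap.opNorm_le_sum_norm_apply_single {ι : Type*} [Fintype ι]
    [DecidableEq ι] (L : (ι → ℝ) →L[ℝ] V) : ‖L‖ ≤ ∑ i, ‖L (Pi.single i 1)‖ := by
  refine L.opNorm_le_bound (Finset.sum_nonneg fun i _ => norm_nonneg _) fun v => ?_
  calc ‖L v‖ = ‖∑ i, v i • L (Pi.single i 1)‖ := by
        conv_lhs => rw [← Finset.univ_sum_single v, map_sum]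
        refine congrArg _ (congrArg _ (funext fun i => ?_))
        rw [← map_smul, ← Pi.single_smul', smul_eq_mul, mul_one]
    _ ≤ ∑ i, ‖v i‖ * ‖L (Pi.single i 1)‖ := norm_sum_le_of_le _ fun i _ => (norm_smul _ _).le
    _ ≤ ∑ i, ‖v‖ * ‖L (Pi.single i 1)‖ := by gcongr; exact norm_le_pi_norm v _
    _ = (∑ i, ‖L (Pi.single i 1)‖) * ‖v‖ := by rw [Finset.sum_mul]; simp only [mul_comm]

/-- Grönwall's inequality along the segment from `y₀` to `z`. -/
theorem Convex.eqOn_zero_of_norm_fderiv_le {U : Set E} (hUo : IsOpen U) (hU : Convex ℝ U)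
    (hG : DifferentiableOn ℝ G U) {K : ℝ} (hK : ∀ y ∈ U, ‖fderiv ℝ G y‖ ≤ K * ‖G y‖)
    {y₀ : E} (hy₀ : y₀ ∈ U) (h0 : G y₀ = 0) : EqOn G 0 U := by
  intro z hz
  set v := z - y₀
  have hmem : ∀ t ∈ Icc (0 : ℝ) 1, y₀ + t • v ∈ U := fun t ht => hU.add_smul_sub_mem hy₀ hz ht
  have hderiv : ∀ t ∈ Icc (0 : ℝ) 1,
      HasDerivAt (fun t => G (y₀ + t • v)) (fderiv ℝ G (y₀ + t • v) v) t := by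
    intro t ht
    have hline : HasDerivAt (fun t : ℝ => y₀ + t • v) v t := by
      simpa using ((hasDerivAt_id t).smul_const v).const_add y₀
    exact ((hG _ (hmem t ht)).differentiableAt (hUo.mem_nhds (hmem t ht))).hasFDerivAt
      |>.comp_hasDerivAt t hline
  have hbound : ∀ t ∈ Ico (0 : ℝ) 1,
      ‖fderiv ℝ G (y₀ + t • v) v‖ ≤ K * ‖v‖ * ‖G (y₀ + t • v)‖ := fun t ht =>
    calc ‖fderiv ℝ G (y₀ + t • v) v‖ ≤ ‖fderiv ℝ G (y₀ + t • v)‖ * ‖v‖ :=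
          (fderiv ℝ G _).le_opNorm v
      _ ≤ K * ‖G (y₀ + t • v)‖ * ‖v‖ := by
          gcongr; exact hK _ (hmem t (Ico_subset_Icc_self ht))
      _ = K * ‖v‖ * ‖G (y₀ + t • v)‖ := by ring
  have := eq_zero_of_abs_deriv_le_mul_abs_self_of_eq_zero_right
    (fun t ht => (hderiv t ht).continuousAt.continuousWithinAt)
    (fun t ht => (hderiv t (Ico_subset_Icc_self ht)).hasDerivWithinAt)
    (by simpa using h0) hbound 1 (right_mem_Icc.2 zero_le_one)
  simpa [v] using this

theorem IsPreconnected.eqOn_zero_of_norm_fderiv_le {Ω : Set E} (hconn : IsPreconnected Ω)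
    (hΩ : IsOpen Ω) (hG : DifferentiableOn ℝ G Ω) {K : E → ℝ} (hK : ContinuousOn K Ω)
    (hbound : ∀ y ∈ Ω, ‖fderiv ℝ G y‖ ≤ K y * ‖G y‖) {x₀ : E} (hx₀ : x₀ ∈ Ω) (h0 : G x₀ = 0) :
    EqOn G 0 Ω := by
  have hlocal : ∀ x ∈ Ω, x ∈ closure {y | G y = 0} → G =ᶠ[𝓝 x] 0 := by
    intro x hx hcl
    have hnhds : Ω ∩ {y | K y < K x + 1} ∈ 𝓝 x := inter_mem (hΩ.mem_nhds hx)
      ((hK.continuousAt (hΩ.mem_nhds hx)).eventually_lt continuousAt_const (lt_add_one _))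
    obtain ⟨r, hr, hball⟩ := Metric.mem_nhds_iff.1 hnhds
    obtain ⟨y, hy, hxy⟩ := Metric.mem_closure_iff.1 hcl r hr
    have hzero := Convex.eqOn_zero_of_norm_fderiv_le isOpen_ball (convex_ball x r)
      (hG.mono fun z hz => (hball hz).1) (K := K x + 1)
      (fun z hz => (hbound z (hball hz).1).trans (by gcongr; exact (hball hz).2.le))
      (mem_ball'.2 hxy) hy
    exact eventually_of_mem (ball_mem_nhds x hr) hzero
  have hsub : Ω ⊆ {x | G =ᶠ[𝓝 x] 0} :=
    hconn.subset_of_closure_inter_subset isOpen_setOfPred_eventually_nhds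
      ⟨x₀, hx₀, hlocal x₀ hx₀ (subset_closure h0)⟩
      fun x ⟨hcl, hx⟩ => hlocal x hx (closure_mono (fun y hy => hy.self_of_nhds) hcl)
  exact fun x hx => (hsub hx).self_of_nhds

theorem IsPreconnected.eqOn_zero_of_norm_fderiv_single_le {ι : Type*} [Fintype ι] [DecidableEq ι]
    {G : (ι → ℝ) → V} {Ω : Set (ι → ℝ)} (hconn : IsPreconnected Ω) (hΩ : IsOpen Ω)
    (hG : DifferentiableOn ℝ G Ω) {K : (ι → ℝ) → ℝ} (hK : ContinuousOn K Ω)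
    (hbound : ∀ y ∈ Ω, ∀ j, ‖fderiv ℝ G y (Pi.single j 1)‖ ≤ K y * ‖G y‖) {x₀ : ι → ℝ}
    (hx₀ : x₀ ∈ Ω) (h0 : G x₀ = 0) : EqOn G 0 Ω := by
  refine hconn.eqOn_zero_of_norm_fderiv_le hΩ hG (K := fun y => Fintype.card ι * K y)
    (continuousOn_const.mul hK) (fun y hy => ?_) hx₀ h0
  calc ‖fderiv ℝ G y‖ ≤ ∑ j, ‖fderiv ℝ G y (Pi.single j 1)‖ :=
        ContinuousLinearMap.opNorm_le_sum_norm_apply_single _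
    _ ≤ ∑ _j : ι, K y * ‖G y‖ := Finset.sum_le_sum fun j _ => hbound y hy j
    _ = Fintype.card ι * K y * ‖G y‖ := by
        rw [Finset.sum_const, nsmul_eq_mul, Finset.card_univ, mul_assoc]

end LinearPfaffianUniqueness

section PartialDerivatives

variable {Ω : Set E3} {f g : E3 → ℝ} {x : E3}

theorem pd_congr_of_eqOn (hΩ : IsOpen Ω) (hx : x ∈ Ω) (h : EqOn f g Ω) (j : Fin 3) :
    pd j f x = pd j g x := by
  rw [pd, pd, (eventuallyEq_of_mem (hΩ.mem_nhds hx) h).fderiv_eq]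

theorem pd_mul (hf : DifferentiableAt ℝ f x) (hg : DifferentiableAt ℝ g x) (j : Fin 3) :
    pd j (fun y => f y * g y) x = pd j f x * g x + f x * pd j g x := by
  simp only [pd, fderiv_fun_mul hf hg, _root_.add_apply, _root_.smul_apply, smul_eq_mul]
  ring

theorem pd_sub (hf : DifferentiableAt ℝ f x) (hg : DifferentiableAt ℝ g x) (j : Fin 3) :
    pd j (fun y => f y - g y) x = pd j f x - pd j g x := by
  simp only [pd, fderiv_fun_sub hf hg, _root_.sub_apply]

theorem pd_sum {ι : Type*} (s : Finset ι) {f : ι → E3 → ℝ}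
    (hf : ∀ i ∈ s, DifferentiableAt ℝ (f i) x) (j : Fin 3) :
    pd j (fun y => ∑ i ∈ s, f i y) x = ∑ i ∈ s, pd j (f i) x := by
  simp only [pd, fderiv_fun_sum hf, _root_.sum_apply]

theorem ContDiffOn.continuousOn_pd (hf : ContDiffOn ℝ 1 f Ω) (hΩ : IsOpen Ω) (j : Fin 3) :
    ContinuousOn (pd j f) Ω :=
  (hf.continuousOn_fderiv_of_isOpen hΩ le_rfl).clm_apply continuousOn_const

end PartialDerivatives

section MatrixPartialDerivatives

variable {l m n : Type*} {x : E3}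

def pdMatrix (j : Fin 3) (M : E3 → Matrix m n ℝ) (x : E3) : Matrix m n ℝ :=
  Matrix.of fun a b => pd j (fun y => M y a b) x

theorem differentiableAt_mul_apply [Fintype m] {M : E3 → Matrix l m ℝ} {N : E3 → Matrix m n ℝ}
    (hM : ∀ a b, DifferentiableAt ℝ (fun y => M y a b) x)
    (hN : ∀ a b, DifferentiableAt ℝ (fun y => N y a b) x) (a : l) (b : n) :
    DifferentiableAt ℝ (fun y => (M y * N y) a b) x := by
  simp only [mul_apply]
  exact DifferentiableAt.fun_sum fun k _ => (hM a k).fun_mul (hN k b)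

theorem pdMatrix_mul [Fintype m] {M : E3 → Matrix l m ℝ} {N : E3 → Matrix m n ℝ}
    (hM : ∀ a b, DifferentiableAt ℝ (fun y => M y a b) x)
    (hN : ∀ a b, DifferentiableAt ℝ (fun y => N y a b) x) (j : Fin 3) :
    pdMatrix j (fun y => M y * N y) x = pdMatrix j M x * N x + M x * pdMatrix j N x := by
  ext a b
  simp only [pdMatrix, of_apply, Matrix.add_apply, mul_apply]
  rw [pd_sum _ fun k _ => (hM a k).fun_mul (hN k b), ← Finset.sum_add_distrib]
  exact Finset.sum_congr rfl fun k _ => pd_mul (hM a k) (hN k b) j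

theorem pdMatrix_sub {M N : E3 → Matrix m n ℝ}
    (hM : ∀ a b, DifferentiableAt ℝ (fun y => M y a b) x)
    (hN : ∀ a b, DifferentiableAt ℝ (fun y => N y a b) x) (j : Fin 3) :
    pdMatrix j (fun y => M y - N y) x = pdMatrix j M x - pdMatrix j N x := by
  ext a b
  exact pd_sub (hM a b) (hN a b) j

theorem pdMatrix_transpose (M : E3 → Matrix m n ℝ) (j : Fin 3) :
    pdMatrix j (fun y => (M y)ᵀ) x = (pdMatrix j M x)ᵀ :=
  rfl

theorem fderiv_apply_single_eq_pdMatrix [Fintype m] [Fintype n] {M : E3 → Matrix m n ℝ}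
    (hM : DifferentiableAt ℝ M x) (j : Fin 3) :
    fderiv ℝ M x (Pi.single j 1) = pdMatrix j M x := by
  ext a b
  rw [pdMatrix, of_apply, pd,
    (hasFDerivAt_pi'.1 ((hasFDerivAt_pi'.1 hM.hasFDerivAt) a) b).fderiv]
  rfl

end MatrixPartialDerivatives

theorem differentiableAt_matrix {E m n : Type*} [NormedAddCommGroup E] [NormedSpace ℝ E]
    [Fintype m] [Fintype n] {M : E → Matrix m n ℝ} {x : E}
    (hM : ∀ a b, DifferentiableAt ℝ (fun y => M y a b) x) : DifferentiableAt ℝ M x :=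
  differentiableAt_pi.2 fun a => differentiableAt_pi.2 fun b => hM a b

section Christoffel

variable {C F : E3 → Matrix (Fin 3) (Fin 3) ℝ} {Ω : Set E3} {x : E3}

/-- `(Γ_β)_{ρα} = Γ^ρ_{αβ}`, so that the Pfaffian system reads `∂_β F = F Γ_β`. -/
def christoffelMatrix (C : E3 → Matrix (Fin 3) (Fin 3) ℝ) (β : Fin 3) (x : E3) :
    Matrix (Fin 3) (Fin 3) ℝ :=
  Matrix.of fun ρ α => christoffel C ρ α β x

/-- The Christoffel symbols of the first kind `Γ_{μαβ}`, as a matrix in `(μ, α)` for fixed `β`. -/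
def christoffelFirstKind (C : E3 → Matrix (Fin 3) (Fin 3) ℝ) (β : Fin 3) (x : E3) :
    Matrix (Fin 3) (Fin 3) ℝ :=
  Matrix.of fun μ α => (1 / 2) *
    (pd β (fun y => C y α μ) x + pd α (fun y => C y β μ) x - pd μ (fun y => C y α β) x)

theorem christoffelMatrix_eq_inv_mul (C : E3 → Matrix (Fin 3) (Fin 3) ℝ) (β : Fin 3) (x : E3) :
    christoffelMatrix C β x = (C x)⁻¹ * christoffelFirstKind C β x := by
  ext ρ α
  simp only [christoffelMatrix, christoffelFirstKind, christoffel, of_apply, mul_apply,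
    Finset.mul_sum]
  exact Finset.sum_congr rfl fun μ _ => by ring

theorem christoffelFirstKind_add_transpose (hΩ : IsOpen Ω) (hsym : ∀ y ∈ Ω, (C y).IsSymm)
    (hx : x ∈ Ω) (β : Fin 3) :
    christoffelFirstKind C β x + (christoffelFirstKind C β x)ᵀ = pdMatrix β C x := by
  have hswap : ∀ a b j, pd j (fun y => C y a b) x = pd j (fun y => C y b a) x := fun a b j =>
    pd_congr_of_eqOn hΩ hx (fun y hy => (hsym y hy).apply b a) j
  ext α γ
  simp only [christoffelFirstKind, pdMatrix, Matrix.add_apply, transpose_apply, of_apply]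
  rw [hswap γ α β, hswap β α γ, hswap γ β α]
  ring

theorem pdMatrix_eq_christoffelMatrix (hΩ : IsOpen Ω) (hsym : ∀ y ∈ Ω, (C y).IsSymm)
    (hdet : IsUnit (C x).det) (hx : x ∈ Ω) (β : Fin 3) :
    pdMatrix β C x = (christoffelMatrix C β x)ᵀ * C x + C x * christoffelMatrix C β x := by
  have hinvT : ((C x)⁻¹)ᵀ = (C x)⁻¹ := by rw [transpose_nonsing_inv, (hsym x hx).eq]
  rw [christoffelMatrix_eq_inv_mul, transpose_mul, hinvT, Matrix.mul_assoc,
    nonsing_inv_mul _ hdet, Matrix.mul_one, ← Matrix.mul_assoc, mul_nonsing_inv _ hdet,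
    Matrix.one_mul, ← christoffelFirstKind_add_transpose hΩ hsym hx, add_comm]

theorem continuousOn_christoffelMatrix (hΩ : IsOpen Ω)
    (hC : ∀ a b, ContDiffOn ℝ 1 (fun x => C x a b) Ω) (hdet : ∀ x ∈ Ω, IsUnit (C x).det)
    (β : Fin 3) : ContinuousOn (christoffelMatrix C β) Ω := by
  have hinv : ContinuousOn (fun y => (C y)⁻¹) Ω := fun x hx => by
    have hCx : ContinuousAt C x := continuousAt_pi.2 fun a => continuousAt_pi.2 fun b =>
      (hC a b).continuousOn.continuousAt (hΩ.mem_nhds hx)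
    refine ((continuousAt_matrix_inv _ ?_).comp hCx).continuousWithinAt
    rw [Ring.inverse_eq_inv']
    exact continuousAt_inv₀ (hdet x hx).ne_zero
  have hfirst : ContinuousOn (christoffelFirstKind C β) Ω :=
    continuousOn_pi.2 fun μ => continuousOn_pi.2 fun α => continuousOn_const.mul
      ((((hC α μ).continuousOn_pd hΩ β).add ((hC β μ).continuousOn_pd hΩ α)).sub
        ((hC α β).continuousOn_pd hΩ μ))
  rw [show christoffelMatrix C β = fun y => (C y)⁻¹ * christoffelFirstKind C β y from
    funext (christoffelMatrix_eq_inv_mul C β)]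
  exact hinv.mul hfirst

theorem SolvesPfaffian.pdMatrix_eq (hF : SolvesPfaffian C F Ω) (hx : x ∈ Ω) (β : Fin 3) :
    pdMatrix β F x = F x * christoffelMatrix C β x := by
  ext i α
  simp only [pdMatrix, christoffelMatrix, of_apply, mul_apply, hF x hx i α β]
  exact Finset.sum_congr rfl fun ρ _ => mul_comm _ _

theorem SolvesPfaffian.pdMatrix_transpose_mul_self_sub (hF : SolvesPfaffian C F Ω)
    (hΩ : IsOpen Ω) (hsym : ∀ y ∈ Ω, (C y).IsSymm) (hdet : IsUnit (C x).det) (hx : x ∈ Ω)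
    (hFd : ∀ i a, DifferentiableAt ℝ (fun y => F y i a) x)
    (hCd : ∀ a b, DifferentiableAt ℝ (fun y => C y a b) x) (β : Fin 3) :
    pdMatrix β (fun y => (F y)ᵀ * F y - C y) x =
      (christoffelMatrix C β x)ᵀ * ((F x)ᵀ * F x - C x) +
        ((F x)ᵀ * F x - C x) * christoffelMatrix C β x := by
  rw [pdMatrix_sub (M := fun y => (F y)ᵀ * F y)
      (differentiableAt_mul_apply (fun a b => hFd b a) hFd) hCd,
    pdMatrix_mul (M := fun y => (F y)ᵀ) (fun a b => hFd b a) hFd, pdMatrix_transpose,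
    hF.pdMatrix_eq hx, pdMatrix_eq_christoffelMatrix hΩ hsym hdet hx]
  simp only [transpose_mul, Matrix.mul_sub, Matrix.sub_mul, Matrix.mul_assoc]
  abel

/-- The operator norm is not invariant under transposition, hence both terms. -/
def christoffelBound (C : E3 → Matrix (Fin 3) (Fin 3) ℝ) (x : E3) : ℝ :=
  ∑ β, (‖(christoffelMatrix C β x)ᵀ‖ + ‖christoffelMatrix C β x‖)

theorem continuousOn_christoffelBound (hΩ : IsOpen Ω)
    (hC : ∀ a b, ContDiffOn ℝ 1 (fun x => C x a b) Ω) (hdet : ∀ x ∈ Ω, IsUnit (C x).det) :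
    ContinuousOn (christoffelBound C) Ω :=
  continuousOn_finsetSum _ fun β _ =>
    have hΓ := continuousOn_christoffelMatrix hΩ hC hdet β
    (continuous_id.matrix_transpose.comp_continuousOn hΓ).norm.add hΓ.norm

theorem SolvesPfaffian.norm_pdMatrix_transpose_mul_self_sub_le (hF : SolvesPfaffian C F Ω)
    (hΩ : IsOpen Ω) (hsym : ∀ y ∈ Ω, (C y).IsSymm) (hdet : IsUnit (C x).det) (hx : x ∈ Ω)
    (hFd : ∀ i a, DifferentiableAt ℝ (fun y => F y i a) x)
    (hCd : ∀ a b, DifferentiableAt ℝ (fun y => C y a b) x) (β : Fin 3) :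
    ‖pdMatrix β (fun y => (F y)ᵀ * F y - C y) x‖ ≤
      christoffelBound C x * ‖(F x)ᵀ * F x - C x‖ := by
  have hβ : ‖(christoffelMatrix C β x)ᵀ‖ + ‖christoffelMatrix C β x‖ ≤ christoffelBound C x :=
    Finset.single_le_sum (f := fun β => ‖(christoffelMatrix C β x)ᵀ‖ + ‖christoffelMatrix C β x‖)
      (fun β _ => by positivity) (Finset.mem_univ β)
  rw [hF.pdMatrix_transpose_mul_self_sub hΩ hsym hdet hx hFd hCd β]
  calc _ ≤ ‖(christoffelMatrix C β x)ᵀ‖ * ‖(F x)ᵀ * F x - C x‖ +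
        ‖(F x)ᵀ * F x - C x‖ * ‖christoffelMatrix C β x‖ :=
        (norm_add_le _ _).trans (add_le_add (norm_mul_le _ _) (norm_mul_le _ _))
    _ = (‖(christoffelMatrix C β x)ᵀ‖ + ‖christoffelMatrix C β x‖) * ‖(F x)ᵀ * F x - C x‖ := by
        ring
    _ ≤ christoffelBound C x * ‖(F x)ᵀ * F x - C x‖ := by gcongr

end Christoffel

/-- If a C¹ matrix field `F` solves the Pfaffian system of a C² positive-definite
symmetric field `C` on a connected open `Ω ⊆ ℝ³`, and `F(x₀)ᵀ F(x₀) = C(x₀)` at a single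
point `x₀ ∈ Ω`, then `F(x)ᵀ F(x) = C(x)` throughout `Ω`. -/
theorem weingarten_stmt9 (Ω : Set E3) (hΩ : IsOpen Ω) (hconn : IsConnected Ω)
    (C : E3 → Matrix (Fin 3) (Fin 3) ℝ)
    (hCreg : ∀ a b, ContDiffOn ℝ 2 (fun x => C x a b) Ω)
    (hpos : ∀ x ∈ Ω, (C x).PosDef)
    (hsym : ∀ x ∈ Ω, (C x).IsSymm)
    (F : E3 → Matrix (Fin 3) (Fin 3) ℝ)
    (hFreg : ∀ i a, ContDiffOn ℝ 1 (fun x => F x i a) Ω)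
    (hF : SolvesPfaffian C F Ω)
    (x₀ : E3) (hx₀ : x₀ ∈ Ω) (hinit : (F x₀)ᵀ * F x₀ = C x₀) :
    ∀ x ∈ Ω, (F x)ᵀ * F x = C x := by
  have hC : ∀ a b, ContDiffOn ℝ 1 (fun x => C x a b) Ω := fun a b => (hCreg a b).of_le one_le_two
  have hdet : ∀ x ∈ Ω, IsUnit (C x).det := fun x hx => (hpos x hx).det_pos.ne'.isUnit
  have hdiff : ∀ {f : E3 → ℝ}, ContDiffOn ℝ 1 f Ω → ∀ x ∈ Ω, DifferentiableAt ℝ f x :=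
    fun hf x hx => (hf.differentiableOn one_ne_zero).differentiableAt (hΩ.mem_nhds hx)
  have hFd : ∀ x ∈ Ω, ∀ i a, DifferentiableAt ℝ (fun y => F y i a) x :=
    fun x hx i a => hdiff (hFreg i a) x hx
  have hCd : ∀ x ∈ Ω, ∀ a b, DifferentiableAt ℝ (fun y => C y a b) x :=
    fun x hx a b => hdiff (hC a b) x hx
  have hGd : ∀ x ∈ Ω, DifferentiableAt ℝ (fun y => (F y)ᵀ * F y - C y) x := fun x hx =>
    differentiableAt_matrix fun a b =>
      (differentiableAt_mul_apply (fun a b => hFd x hx b a) (hFd x hx) a b).sub (hCd x hx a b)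
  have hzero := hconn.isPreconnected.eqOn_zero_of_norm_fderiv_single_le hΩ
    (fun x hx => (hGd x hx).differentiableWithinAt) (continuousOn_christoffelBound hΩ hC hdet)
    -- `rw` fails here: the two sides see defeq but syntactically different topologies on matrices
    (fun x hx β => (congrArg norm (fderiv_apply_single_eq_pdMatrix (hGd x hx) β)).trans_le
      (hF.norm_pdMatrix_transpose_mul_self_sub_le hΩ hsym (hdet x hx) hx (hFd x hx)
        (hCd x hx) β))
    hx₀ (sub_eq_zero.2 hinit)
  exact fun x hx => sub_eq_zero.1 (hzero hx)
end
end

section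
/- Let Ω ⊆ ℝ³ be a connected open set, let C be a twice continuously differentiable positive-definite symmetric 3×3 matrix field on Ω with Christoffel symbols Γ, and let F₁, F₂ : Ω → ℝ^{3×3} be continuously differentiable solutions of the Pfaffian system F_{iα,β} = Σ_ρ Γ^ρ_{αβ} F_{iρ}, with F₁(x) invertible for every x ∈ Ω. Then the matrix field x ↦ F₂(x) F₁(x)⁻¹ is constant on Ω. If in addition F₁(x)ᵀ F₁(x) = F₂(x)ᵀ F₂(x) = C(x) for all x ∈ Ω, then this constant matrix is orthogonal. -/
/-!
Both solutions satisfy `∂_β F = F Γ_β` with the same matrix `(Γ_β)_{ρα} = Γ^ρ_{αβ}`. Since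
`∂_β (F₁⁻¹) = -F₁⁻¹ (∂_β F₁) F₁⁻¹`, the product rule gives
`∂_β (F₂ F₁⁻¹) = F₂ Γ_β F₁⁻¹ - F₂ F₁⁻¹ F₁ Γ_β F₁⁻¹ = 0`, so `F₂ F₁⁻¹` is constant on the connected
open set `Ω`. If `F₁ᵀ F₁ = F₂ᵀ F₂`, then `(F₂ F₁⁻¹)ᵀ (F₂ F₁⁻¹) = F₁⁻ᵀ F₁ᵀ F₁ F₁⁻¹ = 1`.
-/

noncomputable section

open Matrix

section MatrixCalculus

variable {𝕜 E : Type*} [NontriviallyNormedField 𝕜] [NormedAddCommGroup E] [NormedSpace 𝕜 E]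
  {m n p : Type*} [Fintype n]

def matrixDeriv (A : E → Matrix m p 𝕜) (x v : E) : Matrix m p 𝕜 :=
  Matrix.of fun i j => fderiv 𝕜 (fun y => A y i j) x v

theorem matrixDeriv_congr_of_eventuallyEq {A B : E → Matrix m p 𝕜} {x : E} (h : A =ᶠ[nhds x] B)
    (v : E) : matrixDeriv A x v = matrixDeriv B x v := by
  ext i j
  simp only [matrixDeriv, of_apply]
  rw [Filter.EventuallyEq.fderiv_eq (h.mono fun y hy => by rw [hy])]

variable {A B : E → Matrix n n 𝕜} {x : E}

theorem matrixDeriv_mul (hA : ∀ i j, DifferentiableAt 𝕜 (fun y => A y i j) x)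
    (hB : ∀ i j, DifferentiableAt 𝕜 (fun y => B y i j) x) (v : E) :
    matrixDeriv (fun y => A y * B y) x v =
      matrixDeriv A x v * B x + A x * matrixDeriv B x v := by
  ext i j
  have hprod := HasFDerivAt.fun_sum (u := Finset.univ) (A := fun k y => A y i k * B y k j)
    fun k _ => (hA i k).hasFDerivAt.mul (hB k j).hasFDerivAt
  simp only [matrixDeriv, mul_apply, of_apply, Matrix.add_apply]
  rw [hprod.fderiv]
  simp only [_root_.sum_apply, _root_.add_apply, _root_.smul_apply, smul_eq_mul]
  rw [← Finset.sum_add_distrib]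
  exact Finset.sum_congr rfl fun k _ => by ring

theorem differentiableAt_matrix_mul (hA : ∀ i j, DifferentiableAt 𝕜 (fun y => A y i j) x)
    (hB : ∀ i j, DifferentiableAt 𝕜 (fun y => B y i j) x) (i j : n) :
    DifferentiableAt 𝕜 (fun y => (A y * B y) i j) x := by
  simp only [mul_apply]
  exact DifferentiableAt.fun_sum fun k _ => (hA i k).mul (hB k j)

variable [DecidableEq n]

theorem differentiableAt_matrix_det (hA : ∀ i j, DifferentiableAt 𝕜 (fun y => A y i j) x) :
    DifferentiableAt 𝕜 (fun y => (A y).det) x := by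
  simp only [det_apply']
  exact DifferentiableAt.fun_sum fun σ _ =>
    (HasFDerivAt.finsetProd fun i _ => (hA (σ i) i).hasFDerivAt).differentiableAt.const_mul _

theorem differentiableAt_matrix_inv (hA : ∀ i j, DifferentiableAt 𝕜 (fun y => A y i j) x)
    (hdet : IsUnit (A x).det) (i j : n) :
    DifferentiableAt 𝕜 (fun y => (A y)⁻¹ i j) x := by
  have hadj : DifferentiableAt 𝕜 (fun y => (A y).adjugate i j) x := by
    simp only [adjugate_apply]
    refine differentiableAt_matrix_det fun k l => ?_
    by_cases hk : k = j
    · simp [hk]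
    · simpa [updateRow_ne hk] using hA k l
  simp only [inv_def, Ring.inverse_eq_inv', Matrix.smul_apply, smul_eq_mul]
  exact ((differentiableAt_matrix_det hA).inv hdet.ne_zero).mul hadj

theorem matrixDeriv_inv (hA : ∀ i j, DifferentiableAt 𝕜 (fun y => A y i j) x)
    (hdet : IsUnit (A x).det) (v : E) :
    matrixDeriv (fun y => (A y)⁻¹) x v = -((A x)⁻¹ * matrixDeriv A x v * (A x)⁻¹) := by
  have hunit : ∀ᶠ y in nhds x, IsUnit (A y).det :=
    (differentiableAt_matrix_det hA).continuousAt.eventually_ne hdet.ne_zero |>.mono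
      fun y hy => isUnit_iff_ne_zero.mpr hy
  have hderiv_one : matrixDeriv (fun y => (A y)⁻¹ * A y) x v = 0 := by
    rw [matrixDeriv_congr_of_eventuallyEq (hunit.mono fun y hy => nonsing_inv_mul _ hy)]
    ext i j
    simp [matrixDeriv]
  rw [matrixDeriv_mul (differentiableAt_matrix_inv hA hdet) hA] at hderiv_one
  calc matrixDeriv (fun y => (A y)⁻¹) x v
      = (matrixDeriv (fun y => (A y)⁻¹) x v * A x) * (A x)⁻¹ := by
        rw [Matrix.mul_assoc, mul_nonsing_inv _ hdet, Matrix.mul_one]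
    _ = -((A x)⁻¹ * matrixDeriv A x v * (A x)⁻¹) := by
        rw [eq_neg_of_add_eq_zero_left hderiv_one, Matrix.neg_mul]

theorem matrixDeriv_mul_inv_eq_zero (hA : ∀ i j, DifferentiableAt 𝕜 (fun y => A y i j) x)
    (hB : ∀ i j, DifferentiableAt 𝕜 (fun y => B y i j) x) (hdet : IsUnit (A x).det) {v : E}
    {M : Matrix n n 𝕜} (hAM : matrixDeriv A x v = A x * M) (hBM : matrixDeriv B x v = B x * M) :
    matrixDeriv (fun y => B y * (A y)⁻¹) x v = 0 := by
  rw [matrixDeriv_mul hB (differentiableAt_matrix_inv hA hdet), matrixDeriv_inv hA hdet, hAM,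
    hBM, ← Matrix.mul_assoc (A x)⁻¹, nonsing_inv_mul _ hdet, Matrix.one_mul, Matrix.mul_neg,
    Matrix.mul_assoc, add_neg_cancel]

end MatrixCalculus

theorem Matrix.transpose_mul_self_mul_inv_eq_one {R n : Type*} [CommRing R] [Fintype n]
    [DecidableEq n] {A B : Matrix n n R} (hA : IsUnit A.det) (h : Bᵀ * B = Aᵀ * A) :
    (B * A⁻¹)ᵀ * (B * A⁻¹) = 1 := by
  have hAt : IsUnit Aᵀ.det := by rwa [det_transpose]
  rw [transpose_mul, transpose_nonsing_inv, Matrix.mul_assoc, ← Matrix.mul_assoc Bᵀ, h,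
    Matrix.mul_assoc, mul_nonsing_inv _ hA, Matrix.mul_one, nonsing_inv_mul _ hAt]

theorem ContinuousLinearMap.eq_zero_of_apply_single_eq_zero {𝕜 F ι : Type*}
    [NontriviallyNormedField 𝕜] [NormedAddCommGroup F] [NormedSpace 𝕜 F] [Fintype ι]
    [DecidableEq ι] {L : (ι → 𝕜) →L[𝕜] F} (h : ∀ i, L (Pi.single i 1) = 0) : L = 0 := by
  refine coe_injective (LinearMap.pi_ext fun i c => ?_)
  rw [← mul_one c, ← smul_eq_mul, Pi.single_smul', ContinuousLinearMap.coe_coe, map_smul, h,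
    smul_zero]
  rfl

theorem SolvesPfaffian.matrixDeriv_eq {C F : E3 → Matrix (Fin 3) (Fin 3) ℝ} {Ω : Set E3}
    (hF : SolvesPfaffian C F Ω) {x : E3} (hx : x ∈ Ω) (β : Fin 3) :
    matrixDeriv F x (Pi.single β 1) = F x * Matrix.of fun ρ α => christoffel C ρ α β x := by
  ext i α
  rw [mul_apply]
  exact (hF x hx i α β).trans (Finset.sum_congr rfl fun ρ _ => mul_comm _ _)

theorem weingarten_stmt11_general (Ω : Set E3) (hΩ : IsOpen Ω) (hconn : IsConnected Ω)
    (C : E3 → Matrix (Fin 3) (Fin 3) ℝ)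
    (F₁ F₂ : E3 → Matrix (Fin 3) (Fin 3) ℝ)
    (hF₁reg : ∀ i a, ContDiffOn ℝ 1 (fun x => F₁ x i a) Ω)
    (hF₂reg : ∀ i a, ContDiffOn ℝ 1 (fun x => F₂ x i a) Ω)
    (hF₁ : SolvesPfaffian C F₁ Ω) (hF₂ : SolvesPfaffian C F₂ Ω)
    (hF₁inv : ∀ x ∈ Ω, IsUnit (F₁ x)) :
    (∀ x ∈ Ω, ∀ z ∈ Ω, F₂ x * (F₁ x)⁻¹ = F₂ z * (F₁ z)⁻¹) ∧
    ((∀ x ∈ Ω, (F₁ x)ᵀ * F₁ x = C x ∧ (F₂ x)ᵀ * F₂ x = C x) →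
      ∀ x ∈ Ω, (F₂ x * (F₁ x)⁻¹)ᵀ * (F₂ x * (F₁ x)⁻¹) = 1) := by
  have hdiff₁ : ∀ x ∈ Ω, ∀ i a, DifferentiableAt ℝ (fun y => F₁ y i a) x := fun x hx i a =>
    ((hF₁reg i a).contDiffAt (hΩ.mem_nhds hx)).differentiableAt one_ne_zero
  have hdiff₂ : ∀ x ∈ Ω, ∀ i a, DifferentiableAt ℝ (fun y => F₂ y i a) x := fun x hx i a =>
    ((hF₂reg i a).contDiffAt (hΩ.mem_nhds hx)).differentiableAt one_ne_zero
  have hdet : ∀ x ∈ Ω, IsUnit (F₁ x).det := fun x hx => (isUnit_iff_isUnit_det _).1 (hF₁inv x hx)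
  refine ⟨fun x hx z hz => ?_, fun hgram x hx => ?_⟩
  · ext i j
    refine hΩ.is_const_of_fderiv_eq_zero (𝕜 := ℝ) hconn.isPreconnected
      (f := fun y => (F₂ y * (F₁ y)⁻¹) i j) (fun y hy => ?_) (fun y hy => ?_) hx hz
    · exact (differentiableAt_matrix_mul (hdiff₂ y hy)
        (differentiableAt_matrix_inv (hdiff₁ y hy) (hdet y hy)) i j).differentiableWithinAt
    · refine ContinuousLinearMap.eq_zero_of_apply_single_eq_zero fun β => ?_
      exact congrFun₂ (matrixDeriv_mul_inv_eq_zero (hdiff₁ y hy) (hdiff₂ y hy) (hdet y hy)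
        (hF₁.matrixDeriv_eq hy β) (hF₂.matrixDeriv_eq hy β)) i j
  · exact transpose_mul_self_mul_inv_eq_one (hdet x hx) ((hgram x hx).2.trans (hgram x hx).1.symm)

/-- For two C¹ solutions `F₁, F₂` of the Pfaffian system of a C² positive-definite
symmetric field `C` on a connected open `Ω ⊆ ℝ³` with `F₁` pointwise invertible, the
field `x ↦ F₂(x) F₁(x)⁻¹` is constant on `Ω`; if moreover `F₁ᵀF₁ = F₂ᵀF₂ = C` on `Ω`,
that constant matrix is orthogonal. -/
theorem weingarten_stmt11 (Ω : Set E3) (hΩ : IsOpen Ω) (hconn : IsConnected Ω)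
    (C : E3 → Matrix (Fin 3) (Fin 3) ℝ)
    (hCreg : ∀ a b, ContDiffOn ℝ 2 (fun x => C x a b) Ω)
    (hpos : ∀ x ∈ Ω, (C x).PosDef)
    (hsym : ∀ x ∈ Ω, (C x).IsSymm)
    (F₁ F₂ : E3 → Matrix (Fin 3) (Fin 3) ℝ)
    (hF₁reg : ∀ i a, ContDiffOn ℝ 1 (fun x => F₁ x i a) Ω)
    (hF₂reg : ∀ i a, ContDiffOn ℝ 1 (fun x => F₂ x i a) Ω)
    (hF₁ : SolvesPfaffian C F₁ Ω) (hF₂ : SolvesPfaffian C F₂ Ω)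
    (hF₁inv : ∀ x ∈ Ω, IsUnit (F₁ x)) :
    (∀ x ∈ Ω, ∀ z ∈ Ω, F₂ x * (F₁ x)⁻¹ = F₂ z * (F₁ z)⁻¹) ∧
    ((∀ x ∈ Ω, (F₁ x)ᵀ * F₁ x = C x ∧ (F₂ x)ᵀ * F₂ x = C x) →
      ∀ x ∈ Ω, (F₂ x * (F₁ x)⁻¹)ᵀ * (F₂ x * (F₁ x)⁻¹) = 1) :=
  weingarten_stmt11_general Ω hΩ hconn C F₁ F₂ hF₁reg hF₂reg hF₁ hF₂ hF₁inv
end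
end

section
/- Let Ω ⊆ ℝ³ be an open set, let C be a twice continuously differentiable positive-definite symmetric 3×3 matrix field on Ω with Christoffel symbols Γ, and let F : Ω → ℝ^{3×3} be a continuously differentiable solution of the Pfaffian system F_{iα,β} = Σ_ρ Γ^ρ_{αβ} F_{iρ} on Ω. Then for any two C¹ loops γ₀, γ₁ that are freely homotopic in Ω: ∫₀¹ F(γ₀(t)) γ₀'(t) dt = ∫₀¹ F(γ₁(t)) γ₁'(t) dt; i.e., the loop integral of F depends only on the free homotopy class of the loop. -/
/-!
By the Pfaffian system, `F_{iα,β} = Σ_ρ Γ^ρ_{αβ} F_{iρ}`, and the Christoffel symbols of a symmetric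
field are symmetric in `α, β`; hence `F_{iα,β} = F_{iβ,α}`, i.e. every row of `F` is a closed 1-form
on `Ω`. Loop integrals of closed 1-forms are invariant under free homotopy. By the Poincaré lemma
on convex sets, integrals of a closed form along segments inside a ball in `Ω` are additive.
Subdivide the homotopy square into a grid fine enough that every cell is mapped into such a ball.
Along each row of grid points the sum of the segment integrals is constant: the two paths around a
cell have the same integral, and the contributions of the vertical edges telescope because the
homotopy is periodic in `t`. The first and last rows give the integrals of `γ₀` and `γ₁`.
-/

noncomputable section

open Matrix

open MeasureTheory Set Metric

section Curves

variable {E F : Type*} [NormedAddCommGroup E] [NormedSpace ℝ E]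
  [NormedAddCommGroup F] [NormedSpace ℝ F] {ω : E → E →L[ℝ] F} {U : Set E}

theorem intervalIntegrable_apply_derivWithin (hω : ContinuousOn ω U) {γ : ℝ → E}
    (hγ : ContDiffOn ℝ 1 γ (Icc 0 1)) {u v : ℝ} (hu : 0 ≤ u) (huv : u ≤ v) (hv : v ≤ 1)
    (hγU : MapsTo γ (Icc u v) U) :
    IntervalIntegrable (fun t => ω (γ t) (derivWithin γ (Icc 0 1) t)) volume u v := by
  have hsub : Icc u v ⊆ Icc 0 1 := Icc_subset_Icc hu hv
  refine ContinuousOn.intervalIntegrable_of_Icc huv (ContinuousOn.clm_apply ?_ ?_)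
  · exact hω.comp (hγ.continuousOn.mono hsub) hγU
  · exact (hγ.continuousOn_derivWithin (uniqueDiffOn_Icc zero_lt_one) le_rfl).mono hsub

theorem integral_apply_derivWithin_Icc (ω : E → E →L[ℝ] F) (γ : ℝ → E) {a b : ℝ} (hab : a ≤ b) :
    ∫ t in a..b, ω (γ t) (derivWithin γ (Icc a b) t) = ∫ t in a..b, ω (γ t) (deriv γ t) := by
  apply intervalIntegral.integral_congr_ae_restrict
  rw [uIoc_of_le hab, ← restrict_Ioo_eq_restrict_Ioc]
  filter_upwards [ae_restrict_mem measurableSet_Ioo] with t ht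
  rw [derivWithin_of_mem_nhds (Icc_mem_nhds ht.1 ht.2)]

variable [CompleteSpace F]

theorem integral_comp_eq_sub_of_hasFDerivAt {f : E → F} {γ γ' : ℝ → E} {u v : ℝ} (huv : u ≤ v)
    (hf : ∀ x ∈ U, HasFDerivAt f (ω x) x) (hγU : MapsTo γ (Icc u v) U)
    (hγc : ContinuousOn γ (Icc u v)) (hγ' : ∀ t ∈ Ioo u v, HasDerivAt γ (γ' t) t)
    (hint : IntervalIntegrable (fun t => ω (γ t) (γ' t)) volume u v) :
    ∫ t in u..v, ω (γ t) (γ' t) = f (γ v) - f (γ u) :=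
  intervalIntegral.integral_eq_sub_of_hasDerivAt_of_le huv
    (fun t ht => (hf _ (hγU ht)).continuousAt.comp_continuousWithinAt (hγc t ht))
    (fun t ht => (hf _ (hγU (Ioo_subset_Icc_self ht))).comp_hasDerivAt t (hγ' t ht)) hint

end Curves

section Grid

theorem natCast_div_mem_Icc {m N : ℕ} (hm : m ≤ N) : (m / N : ℝ) ∈ Icc 0 1 :=
  ⟨by positivity, div_le_one_of_le₀ (by exact_mod_cast hm) (by positivity)⟩

theorem Icc_natCast_div_subset {j N : ℕ} (hj : j < N) :
    Icc (j / N : ℝ) ((j + 1) / N) ⊆ Icc 0 1 := by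
  have h := natCast_div_mem_Icc (Nat.succ_le_of_lt hj)
  push_cast at h
  exact Icc_subset_Icc (natCast_div_mem_Icc hj.le).1 h.2

theorem natCast_div_mem_Icc_div {N m m' : ℕ} (h₁ : m ≤ m') (h₂ : m' ≤ m + 1) :
    (m' / N : ℝ) ∈ Icc (m / N : ℝ) ((m + 1) / N) :=
  ⟨by gcongr, by gcongr; exact_mod_cast h₂⟩

def gridCell (N m j : ℕ) : Set (ℝ × ℝ) :=
  Icc (m / N : ℝ) ((m + 1) / N) ×ˢ Icc (j / N : ℝ) ((j + 1) / N)

theorem dist_le_of_mem_gridCell {N m j : ℕ} {q : ℝ × ℝ} (hq : q ∈ gridCell N m j) :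
    dist ((m / N : ℝ), (j / N : ℝ)) q ≤ 1 / N := by
  have hlen : ∀ i : ℕ, ((i + 1) / N : ℝ) - i / N = 1 / N := fun i => by ring
  rw [Prod.dist_eq, max_le_iff]
  exact ⟨(Real.dist_le_of_mem_Icc (left_mem_Icc.2 (hq.1.1.trans hq.1.2)) hq.1).trans (hlen m).le,
    (Real.dist_le_of_mem_Icc (left_mem_Icc.2 (hq.2.1.trans hq.2.2)) hq.2).trans (hlen j).le⟩

theorem exists_nat_forall_mapsTo_gridCell {E : Type*} [NormedAddCommGroup E] [NormedSpace ℝ E]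
    {H : ℝ × ℝ → E} {Ω : Set E} (hΩ : IsOpen Ω) (hH : ContinuousOn H (Icc 0 1 ×ˢ Icc 0 1))
    (hHΩ : MapsTo H (Icc 0 1 ×ˢ Icc 0 1) Ω) :
    ∃ N : ℕ, 0 < N ∧ ∀ m ≤ N, ∀ j ≤ N, ∃ U ⊆ Ω, IsOpen U ∧ Convex ℝ U ∧
      MapsTo H (gridCell N m j ∩ Icc 0 1 ×ˢ Icc 0 1) U := by
  have hQ : IsCompact (Icc (0 : ℝ) 1 ×ˢ Icc (0 : ℝ) 1) := isCompact_Icc.prod isCompact_Icc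
  obtain ⟨ε, hε, hthick⟩ := (hQ.image_of_continuousOn hH).exists_thickening_subset_open hΩ
    (mapsTo_iff_image_subset.1 hHΩ)
  obtain ⟨δ, hδ, hHδ⟩ :=
    Metric.uniformContinuousOn_iff.1 (hQ.uniformContinuousOn_of_continuous hH) ε hε
  obtain ⟨N, hN, hNδ⟩ : ∃ N : ℕ, 0 < N ∧ 1 / (N : ℝ) < δ := by
    obtain ⟨n, hn⟩ := exists_nat_one_div_lt hδ
    exact ⟨n + 1, n.succ_pos, by exact_mod_cast hn⟩
  refine ⟨N, hN, fun m hm j hj => ?_⟩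
  have hp : ((m / N : ℝ), (j / N : ℝ)) ∈ Icc (0 : ℝ) 1 ×ˢ Icc (0 : ℝ) 1 :=
    ⟨natCast_div_mem_Icc hm, natCast_div_mem_Icc hj⟩
  refine ⟨ball (H (m / N, j / N)) ε,
    (ball_subset_thickening (mem_image_of_mem H hp) ε).trans hthick, isOpen_ball, convex_ball _ _,
    fun q hq => ?_⟩
  rw [mem_ball, dist_comm]
  exact hHδ _ hp q hq.2 ((dist_le_of_mem_gridCell hq.1).trans_lt hNδ)

theorem Finset.sum_range_eq_of_forall_add_eq {G : Type*} [AddCommGroup G] {f g : ℕ → ℕ → G}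
    {M N : ℕ} (hsq : ∀ m < M, ∀ j < N, f m j + g m (j + 1) = g m j + f (m + 1) j)
    (hper : ∀ m < M, g m N = g m 0) :
    ∑ j ∈ Finset.range N, f 0 j = ∑ j ∈ Finset.range N, f M j := by
  induction M with
  | zero => rfl
  | succ M ih =>
    rw [ih (fun m hm => hsq m (by omega)) (fun m hm => hper m (by omega))]
    have hrow : ∑ j ∈ Finset.range N, f M j
        = ∑ j ∈ Finset.range N, (f (M + 1) j + (g M j - g M (j + 1))) :=
      Finset.sum_congr rfl fun j hj => by
        rw [← sub_eq_zero, ← sub_eq_zero.2 (hsq M (by omega) j (Finset.mem_range.1 hj))]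
        abel
    rw [hrow, Finset.sum_add_distrib, Finset.sum_range_sub', hper M (by omega), sub_self,
      add_zero]

end Grid

section ClosedForms

variable {E F : Type*} [NormedAddCommGroup E] [NormedSpace ℝ E]
  [NormedAddCommGroup F] [NormedSpace ℝ F]

structure IsClosedFormOn (ω : E → E →L[ℝ] F) (Ω : Set E) : Prop where
  differentiableOn : DifferentiableOn ℝ ω Ω
  fderiv_symm : ∀ x ∈ Ω, ∀ u v, fderiv ℝ ω x u v = fderiv ℝ ω x v u

namespace IsClosedFormOn

variable {ω : E → E →L[ℝ] F} {Ω U : Set E}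

theorem mono (h : IsClosedFormOn ω Ω) (hUΩ : U ⊆ Ω) : IsClosedFormOn ω U :=
  ⟨h.differentiableOn.mono hUΩ, fun x hx => h.fderiv_symm x (hUΩ hx)⟩

theorem hasFDerivWithinAt (h : IsClosedFormOn ω U) (hUo : IsOpen U) {x : E} (hx : x ∈ U) :
    HasFDerivWithinAt ω (fderiv ℝ ω x) U x :=
  ((h.differentiableOn x hx).differentiableAt (hUo.mem_nhds hx)).hasFDerivAt.hasFDerivWithinAt

theorem curveIntegral_segment_add (h : IsClosedFormOn ω U) (hUo : IsOpen U) (hUc : Convex ℝ U)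
    {a b c : E} (ha : a ∈ U) (hb : b ∈ U) (hc : c ∈ U) :
    (∫ᶜ x in .segment a b, ω x) + ∫ᶜ x in .segment b c, ω x = ∫ᶜ x in .segment a c, ω x :=
  hUc.curveIntegral_segment_add_eq_of_hasFDerivWithinAt_symmetric
    (fun _ hx => h.hasFDerivWithinAt hUo hx) (fun x hx u _ v _ => h.fderiv_symm x hx u v)
    ha hb hc

variable [CompleteSpace F]

theorem hasFDerivAt_curveIntegral_segment (h : IsClosedFormOn ω U) (hUo : IsOpen U)
    (hUc : Convex ℝ U) {a b : E} (ha : a ∈ U) (hb : b ∈ U) :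
    HasFDerivAt (∫ᶜ x in .segment a ·, ω x) (ω b) b :=
  (hUc.hasFDerivWithinAt_curveIntegral_segment_of_hasFDerivWithinAt_symmetric
    (fun _ hx => h.hasFDerivWithinAt hUo hx) (fun x hx u _ v _ => h.fderiv_symm x hx u v)
    ha hb).hasFDerivAt (hUo.mem_nhds hb)

theorem integral_eq_curveIntegral_segment (h : IsClosedFormOn ω U) (hUo : IsOpen U)
    (hUc : Convex ℝ U) {γ : ℝ → E} (hγ : ContDiffOn ℝ 1 γ (Icc 0 1)) {u v : ℝ} (hu : 0 ≤ u)
    (huv : u ≤ v) (hv : v ≤ 1) (hγU : MapsTo γ (Icc u v) U) :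
    ∫ t in u..v, ω (γ t) (derivWithin γ (Icc 0 1) t) = ∫ᶜ x in .segment (γ u) (γ v), ω x := by
  have hderiv : ∀ t ∈ Ioo u v, HasDerivAt γ (derivWithin γ (Icc 0 1) t) t := fun t ht => by
    have hmem : Icc (0 : ℝ) 1 ∈ nhds t := Icc_mem_nhds (hu.trans_lt ht.1) (ht.2.trans_le hv)
    rw [derivWithin_of_mem_nhds hmem]
    exact ((hγ.contDiffAt hmem).differentiableAt one_ne_zero).hasDerivAt
  rw [integral_comp_eq_sub_of_hasFDerivAt huv
    (fun x hx => h.hasFDerivAt_curveIntegral_segment hUo hUc (hγU ⟨le_rfl, huv⟩) hx) hγU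
    (hγ.continuousOn.mono (Icc_subset_Icc hu hv)) hderiv
    (intervalIntegrable_apply_derivWithin h.differentiableOn.continuousOn hγ hu huv hv hγU)]
  simp

theorem integral_eq_sum_curveIntegral_segment (h : IsClosedFormOn ω Ω) {γ : ℝ → E}
    (hγ : ContDiffOn ℝ 1 γ (Icc 0 1)) {N : ℕ} (hN : 0 < N)
    (hU : ∀ j < N, ∃ U ⊆ Ω, IsOpen U ∧ Convex ℝ U ∧ MapsTo γ (Icc (j / N : ℝ) ((j + 1) / N)) U) :
    ∫ t in (0 : ℝ)..1, ω (γ t) (derivWithin γ (Icc 0 1) t) =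
      ∑ j ∈ Finset.range N, ∫ᶜ x in .segment (γ (j / N)) (γ ((j + 1) / N)), ω x := by
  have hpiece : ∀ j < N, 0 ≤ (j / N : ℝ) ∧ (j / N : ℝ) ≤ (j + 1) / N ∧ ((j + 1) / N : ℝ) ≤ 1 :=
    fun j hj => by
      have := Icc_natCast_div_subset hj
      exact ⟨(this (left_mem_Icc.2 (by gcongr; linarith))).1, by gcongr; linarith,
        (this (right_mem_Icc.2 (by gcongr; linarith))).2⟩
  have hint : ∀ j < N, IntervalIntegrable (fun t => ω (γ t) (derivWithin γ (Icc 0 1) t))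
      volume ((j : ℕ) / N : ℝ) (((j + 1 : ℕ) : ℝ) / N) := fun j hj => by
    obtain ⟨U, hUΩ, -, -, hγU⟩ := hU j hj
    obtain ⟨h0, h1, h2⟩ := hpiece j hj
    push_cast
    exact intervalIntegrable_apply_derivWithin (h.differentiableOn.continuousOn.mono hUΩ) hγ
      h0 h1 h2 hγU
  have hsum := intervalIntegral.sum_integral_adjacent_intervals hint
  rw [Nat.cast_zero, zero_div, div_self (Nat.cast_ne_zero.2 hN.ne')] at hsum
  simp only [Nat.cast_succ] at hsum
  rw [← hsum]
  refine Finset.sum_congr rfl fun j hj => ?_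
  obtain ⟨U, hUΩ, hUo, hUc, hγU⟩ := hU j (Finset.mem_range.1 hj)
  obtain ⟨h0, h1, h2⟩ := hpiece j (Finset.mem_range.1 hj)
  exact (h.mono hUΩ).integral_eq_curveIntegral_segment hUo hUc hγ h0 h1 h2 hγU

theorem integral_eq_sum_curveIntegral_segment_of_gridRow (h : IsClosedFormOn ω Ω)
    {H : ℝ × ℝ → E} {N m : ℕ} (hN : 0 < N) (hm : m ≤ N)
    (hcell : ∀ j < N, ∃ U ⊆ Ω, IsOpen U ∧ Convex ℝ U ∧
      MapsTo H (gridCell N m j ∩ Icc 0 1 ×ˢ Icc 0 1) U)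
    {γ : ℝ → E} (hγ : ContDiffOn ℝ 1 γ (Icc 0 1)) (hHγ : ∀ t ∈ Icc (0 : ℝ) 1, H (m / N, t) = γ t) :
    ∫ t in (0 : ℝ)..1, ω (γ t) (derivWithin γ (Icc 0 1) t) =
      ∑ j ∈ Finset.range N,
        ∫ᶜ x in .segment (H (m / N, j / N)) (H (m / N, (j + 1 : ℕ) / N)), ω x := by
  rw [h.integral_eq_sum_curveIntegral_segment hγ hN fun j hj => ?_]
  · refine Finset.sum_congr rfl fun j hj => ?_
    have hj' : j < N := Finset.mem_range.1 hj
    rw [hHγ _ (natCast_div_mem_Icc hj'.le), hHγ _ (natCast_div_mem_Icc hj'), Nat.cast_succ]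
  · obtain ⟨U, hUΩ, hUo, hUc, hHU⟩ := hcell j hj
    refine ⟨U, hUΩ, hUo, hUc, fun t ht => ?_⟩
    have ht' : t ∈ Icc (0 : ℝ) 1 := Icc_natCast_div_subset hj ht
    rw [← hHγ t ht']
    exact hHU ⟨⟨natCast_div_mem_Icc_div le_rfl m.le_succ, ht⟩, natCast_div_mem_Icc hm, ht'⟩

theorem integral_eq_of_homotopy (h : IsClosedFormOn ω Ω) (hΩ : IsOpen Ω)
    {γ₀ γ₁ : ℝ → E} (hγ₀ : ContDiffOn ℝ 1 γ₀ (Icc 0 1)) (hγ₁ : ContDiffOn ℝ 1 γ₁ (Icc 0 1))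
    {H : ℝ × ℝ → E} (hH : ContinuousOn H (Icc 0 1 ×ˢ Icc 0 1))
    (hHΩ : MapsTo H (Icc 0 1 ×ˢ Icc 0 1) Ω)
    (hH₀ : ∀ t ∈ Icc (0 : ℝ) 1, H (0, t) = γ₀ t) (hH₁ : ∀ t ∈ Icc (0 : ℝ) 1, H (1, t) = γ₁ t)
    (hHper : ∀ s ∈ Icc (0 : ℝ) 1, H (s, 0) = H (s, 1)) :
    ∫ t in (0 : ℝ)..1, ω (γ₀ t) (derivWithin γ₀ (Icc 0 1) t) =
      ∫ t in (0 : ℝ)..1, ω (γ₁ t) (derivWithin γ₁ (Icc 0 1) t) := by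
  obtain ⟨N, hN, hcell⟩ := exists_nat_forall_mapsTo_gridCell hΩ hH hHΩ
  have hN' : (N : ℝ) ≠ 0 := Nat.cast_ne_zero.2 hN.ne'
  set P : ℕ → ℕ → E := fun m j => H (m / N, j / N)
  set seg : E → E → F := fun a b => ∫ᶜ x in .segment a b, ω x
  have hsquare : ∀ m < N, ∀ j < N, seg (P m j) (P m (j + 1)) + seg (P m (j + 1)) (P (m + 1) (j + 1))
      = seg (P m j) (P (m + 1) j) + seg (P (m + 1) j) (P (m + 1) (j + 1)) := by
    -- both sides equal the integral along the diagonal of the cell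
    intro m hm j hj
    obtain ⟨U, hUΩ, hUo, hUc, hHU⟩ := hcell m hm.le j hj.le
    have hcorner : ∀ m' j', m ≤ m' → m' ≤ m + 1 → j ≤ j' → j' ≤ j + 1 → P m' j' ∈ U :=
      fun m' j' h₁ h₂ h₃ h₄ => hHU ⟨⟨natCast_div_mem_Icc_div h₁ h₂, natCast_div_mem_Icc_div h₃ h₄⟩,
        natCast_div_mem_Icc (by omega), natCast_div_mem_Icc (by omega)⟩
    rw [(h.mono hUΩ).curveIntegral_segment_add hUo hUc,
      (h.mono hUΩ).curveIntegral_segment_add hUo hUc] <;> apply hcorner <;> omega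
  have hper : ∀ m < N, seg (P m N) (P (m + 1) N) = seg (P m 0) (P (m + 1) 0) := by
    have hPN : ∀ m' ≤ N, P m' N = P m' 0 := fun m' hm' => by
      simp only [P, Nat.cast_zero, zero_div, div_self hN']
      exact (hHper _ (natCast_div_mem_Icc hm')).symm
    intro m hm
    rw [hPN m hm.le, hPN (m + 1) hm]
  rw [h.integral_eq_sum_curveIntegral_segment_of_gridRow hN (Nat.zero_le N)
      (fun j hj => hcell 0 (Nat.zero_le N) j hj.le) hγ₀ (by simpa using hH₀),
    h.integral_eq_sum_curveIntegral_segment_of_gridRow hN le_rfl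
      (fun j hj => hcell N le_rfl j hj.le) hγ₁ (by simpa [div_self hN'] using hH₁)]
  exact Finset.sum_range_eq_of_forall_add_eq (f := fun m j => seg (P m j) (P m (j + 1)))
    (g := fun m j => seg (P m j) (P (m + 1) j)) hsquare hper

end IsClosedFormOn

end ClosedForms

section Coordinates

variable {F : Type*} [NormedAddCommGroup F] [NormedSpace ℝ F] {n : ℕ} {Ω : Set (Fin n → ℝ)}

theorem isClosedFormOn_of_fderiv_apply_single {ω : (Fin n → ℝ) → (Fin n → ℝ) →L[ℝ] F}
    (hΩ : IsOpen Ω) (hω : DifferentiableOn ℝ ω Ω)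
    (hsymm : ∀ x ∈ Ω, ∀ j k, fderiv ℝ (fun y => ω y (Pi.single k 1)) x (Pi.single j 1) =
      fderiv ℝ (fun y => ω y (Pi.single j 1)) x (Pi.single k 1)) :
    IsClosedFormOn ω Ω := by
  refine ⟨hω, fun x hx u v => ?_⟩
  have hpartial : ∀ j k, fderiv ℝ (fun y => ω y (Pi.single k 1)) x (Pi.single j 1) =
      fderiv ℝ ω x (Pi.single j 1) (Pi.single k 1) := fun j k => by
    rw [fderiv_clm_apply ((hω x hx).differentiableAt (hΩ.mem_nhds hx)) (differentiableAt_const _)]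
    simp
  have hflip : (fderiv ℝ ω x).toLinearMap₁₂ = (fderiv ℝ ω x).flip.toLinearMap₁₂ :=
    LinearMap.ext_basis (Pi.basisFun ℝ (Fin n)) (Pi.basisFun ℝ (Fin n)) fun j k => by
      simpa [← hpartial] using hsymm x hx j k
  exact congr($hflip u v)

def dotForm (v : (Fin n → ℝ) → Fin n → ℝ) (x : Fin n → ℝ) : (Fin n → ℝ) →L[ℝ] ℝ :=
  ∑ k, v x k • ContinuousLinearMap.proj k

@[simp]
theorem dotForm_apply (v : (Fin n → ℝ) → Fin n → ℝ) (x u : Fin n → ℝ) :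
    dotForm v x u = ∑ k, v x k * u k := by
  simp [dotForm]

theorem dotForm_apply_single (v : (Fin n → ℝ) → Fin n → ℝ) (x : Fin n → ℝ) (k : Fin n) :
    dotForm v x (Pi.single k 1) = v x k := by
  simp [Pi.single_apply]

theorem isClosedFormOn_dotForm {v : (Fin n → ℝ) → Fin n → ℝ} (hΩ : IsOpen Ω)
    (hv : ∀ k, DifferentiableOn ℝ (fun x => v x k) Ω)
    (hsymm : ∀ x ∈ Ω, ∀ j k, fderiv ℝ (fun y => v y k) x (Pi.single j 1) =
      fderiv ℝ (fun y => v y j) x (Pi.single k 1)) :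
    IsClosedFormOn (dotForm v) Ω :=
  isClosedFormOn_of_fderiv_apply_single hΩ
    (DifferentiableOn.fun_sum fun k _ => (hv k).smul_const _)
    (by simpa only [dotForm_apply_single] using hsymm)

end Coordinates

theorem christoffel_symm {C : E3 → Matrix (Fin 3) (Fin 3) ℝ} {Ω : Set E3} (hΩ : IsOpen Ω)
    (hsym : ∀ x ∈ Ω, (C x).IsSymm) {x : E3} (hx : x ∈ Ω) (ρ α β : Fin 3) :
    christoffel C ρ α β x = christoffel C ρ β α x := by
  have hpd : ∀ μ, pd μ (fun y => C y α β) x = pd μ (fun y => C y β α) x := fun μ => by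
    unfold pd
    rw [Filter.EventuallyEq.fderiv_eq]
    filter_upwards [hΩ.mem_nhds hx] with y hy using ((hsym y hy).apply α β).symm
  simp only [christoffel, hpd, add_comm]

theorem SolvesPfaffian.pd_symm {C F : E3 → Matrix (Fin 3) (Fin 3) ℝ} {Ω : Set E3}
    (hF : SolvesPfaffian C F Ω) (hΩ : IsOpen Ω) (hsym : ∀ x ∈ Ω, (C x).IsSymm) {x : E3}
    (hx : x ∈ Ω) (i α β : Fin 3) :
    pd β (fun y => F y i α) x = pd α (fun y => F y i β) x := by
  simp only [hF x hx, christoffel_symm hΩ hsym hx _ α β]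

theorem weingarten_stmt13_general (Ω : Set E3) (hΩ : IsOpen Ω)
    (C : E3 → Matrix (Fin 3) (Fin 3) ℝ)
    (hsym : ∀ x ∈ Ω, (C x).IsSymm)
    (F : E3 → Matrix (Fin 3) (Fin 3) ℝ)
    (hFreg : ∀ i a, ContDiffOn ℝ 1 (fun x => F x i a) Ω)
    (hF : SolvesPfaffian C F Ω)
    (γ₀ γ₁ : ℝ → E3) (h₀ : IsC1LoopIn γ₀ Ω) (h₁ : IsC1LoopIn γ₁ Ω)
    (hhom : FreelyHomotopicIn γ₀ γ₁ Ω) :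
    ∀ i : Fin 3,
      (∫ t in (0:ℝ)..1, ∑ k, F (γ₀ t) i k * deriv γ₀ t k) =
      (∫ t in (0:ℝ)..1, ∑ k, F (γ₁ t) i k * deriv γ₁ t k) := by
  intro i
  obtain ⟨H, hH, hHΩ, hH₀, hH₁, hHper⟩ := hhom
  have hclosed : IsClosedFormOn (dotForm fun x => F x i) Ω :=
    isClosedFormOn_dotForm hΩ (fun k => (hFreg i k).differentiableOn one_ne_zero)
      fun x hx j k => hF.pd_symm hΩ hsym hx i k j
  have := hclosed.integral_eq_of_homotopy hΩ h₀.1 h₁.1 hH hHΩ hH₀ hH₁ hHper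
  rw [integral_apply_derivWithin_Icc _ _ zero_le_one,
    integral_apply_derivWithin_Icc _ _ zero_le_one] at this
  simpa only [dotForm_apply] using this

/-- The loop integral of a C¹ solution `F` of the Pfaffian system of a C² positive-definite
symmetric field `C` on an open `Ω ⊆ ℝ³` depends only on the free homotopy class of the
C¹ loop in `Ω`. -/
theorem weingarten_stmt13 (Ω : Set E3) (hΩ : IsOpen Ω)
    (C : E3 → Matrix (Fin 3) (Fin 3) ℝ)
    (hCreg : ∀ a b, ContDiffOn ℝ 2 (fun x => C x a b) Ω)
    (hpos : ∀ x ∈ Ω, (C x).PosDef)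
    (hsym : ∀ x ∈ Ω, (C x).IsSymm)
    (F : E3 → Matrix (Fin 3) (Fin 3) ℝ)
    (hFreg : ∀ i a, ContDiffOn ℝ 1 (fun x => F x i a) Ω)
    (hF : SolvesPfaffian C F Ω)
    (γ₀ γ₁ : ℝ → E3) (h₀ : IsC1LoopIn γ₀ Ω) (h₁ : IsC1LoopIn γ₁ Ω)
    (hhom : FreelyHomotopicIn γ₀ γ₁ Ω) :
    ∀ i : Fin 3,
      (∫ t in (0:ℝ)..1, ∑ k, F (γ₀ t) i k * deriv γ₀ t k) =
      (∫ t in (0:ℝ)..1, ∑ k, F (γ₁ t) i k * deriv γ₁ t k) :=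
  weingarten_stmt13_general Ω hΩ C hsym F hFreg hF γ₀ γ₁ h₀ h₁ hhom
end
end
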